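/- arXiv:math/0211068 — 3 statements merged into one kernel-verified Lean document; each statement's English description precedes it below -/
import Mathlib

section
/- Let u be a 1-cocycle on Γ in Aut_S(g(S)). Then g(S)_u is an R-subalgebra of g(S), every element of g(S) can be written uniquely in the form Σ_{i=0}^{m-1} z^i y_i with y_0, …, y_{m-1} ∈ g(S)_u, and consequently the S-linear map S ⊗_R g(S)_u → g(S) determined by s ⊗ y ↦ s·y is an isomorphism of Lie algebras over S; that is, g(S)_u is an S/R form of g(R) := g ⊗_k R. -/
open scoped TensorProduct
open LaurentPolynomial

set_option maxHeartbeats 1000000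
set_option synthInstance.maxHeartbeats 400000

noncomputable section

namespace LoopPaper

variable {k : Type*} [Field k] {g : Type*} [LieRing g] [LieAlgebra k g]

/-- A linear automorphism of a Lie algebra is a Lie algebra automorphism if it
preserves brackets. -/
def IsLieAut (σ : g ≃ₗ[k] g) : Prop := ∀ x y : g, σ ⁅x, y⁆ = ⁅σ x, σ y⁆

theorem IsLieAut.one : IsLieAut (1 : g ≃ₗ[k] g) := fun _ _ => rfl

theorem IsLieAut.mul {σ τ : g ≃ₗ[k] g} (hσ : IsLieAut σ) (hτ : IsLieAut τ) :
    IsLieAut (σ * τ) := fun x y => by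
  show σ (τ ⁅x, y⁆) = ⁅σ (τ x), σ (τ y)⁆
  rw [hτ, hσ]

theorem IsLieAut.inv {σ : g ≃ₗ[k] g} (hσ : IsLieAut σ) : IsLieAut σ⁻¹ := fun x y => by
  apply σ.injective
  have h1 : ∀ z, σ (σ⁻¹ z) = z := fun z => σ.apply_symm_apply z
  rw [h1, hσ, h1, h1]

/-! ### The variable-scaling automorphism `z ↦ c z` of `k[z,z⁻¹]` -/

/-- The unit `c^n • z^n` of the Laurent polynomial ring. -/
def scaleUnit (c : kˣ) (n : ℤ) : (LaurentPolynomial k)ˣ where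
  val := ((c ^ n : kˣ) : k) • T n
  inv := ((c ^ (-n) : kˣ) : k) • T (-n)
  val_inv := by
    rw [smul_mul_smul_comm, ← T_add, ← Units.val_mul, ← zpow_add, add_neg_cancel, zpow_zero,
      Units.val_one, T_zero, one_smul]
  inv_val := by
    rw [smul_mul_smul_comm, ← T_add, ← Units.val_mul, ← zpow_add, neg_add_cancel, zpow_zero,
      Units.val_one, T_zero, one_smul]

/-- The homomorphism `n ↦ c^n • z^n` from `ℤ` to the units of `k[z,z⁻¹]`. -/
def scaleUnitHom (c : kˣ) : Multiplicative ℤ →* (LaurentPolynomial k)ˣ where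
  toFun n := scaleUnit c n.toAdd
  map_one' := Units.ext (by
    show ((c ^ (0 : ℤ) : kˣ) : k) • T (0 : ℤ) = 1
    rw [zpow_zero, Units.val_one, T_zero, one_smul])
  map_mul' a b := Units.ext (by
    show ((c ^ (a.toAdd + b.toAdd) : kˣ) : k) • T (a.toAdd + b.toAdd) =
      (((c ^ a.toAdd : kˣ) : k) • T a.toAdd) * (((c ^ b.toAdd : kˣ) : k) • T b.toAdd)
    rw [smul_mul_smul_comm, ← T_add, ← Units.val_mul, ← zpow_add])

/-- The `k`-algebra endomorphism of `k[z,z⁻¹]` with `z ↦ c z`. -/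
def scaleVar (c : kˣ) : LaurentPolynomial k →ₐ[k] LaurentPolynomial k :=
  AddMonoidAlgebra.lift k _ ℤ ((Units.coeHom _).comp (scaleUnitHom c))

theorem scaleVar_T (c : kˣ) (n : ℤ) : scaleVar c (T n) = ((c ^ n : kˣ) : k) • T n := by
  have h : (T n : LaurentPolynomial k) = AddMonoidAlgebra.of k ℤ (Multiplicative.ofAdd n) := rfl
  rw [h, scaleVar, AddMonoidAlgebra.lift_of]
  rfl

theorem scaleVar_comp (c d : kˣ) :
    (scaleVar c).comp (scaleVar d) = scaleVar (k := k) (c * d) := by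
  refine AddMonoidAlgebra.algHom_ext ?_ (Subsingleton.elim _ _)
  intro n
  have hT : (AddMonoidAlgebra.single n 1 : LaurentPolynomial k) = T n := rfl
  simp only [AlgHom.coe_comp, Function.comp_apply, hT]
  rw [scaleVar_T, map_smul, scaleVar_T, smul_smul, scaleVar_T]
  congr 1
  rw [mul_zpow, Units.val_mul, mul_comm]

theorem scaleVar_id : scaleVar (1 : kˣ) = AlgHom.id k (LaurentPolynomial k) := by
  refine AddMonoidAlgebra.algHom_ext ?_ (Subsingleton.elim _ _)
  intro n
  have hT : (AddMonoidAlgebra.single n 1 : LaurentPolynomial k) = T n := rfl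
  simp only [hT, AlgHom.coe_id, id_eq]
  rw [scaleVar_T, one_zpow, Units.val_one, one_smul]

/-- The `k`-algebra automorphism of `k[z,z⁻¹]` with `z ↦ c z`. -/
def scaleVarEquiv (c : kˣ) : LaurentPolynomial k ≃ₐ[k] LaurentPolynomial k :=
  AlgEquiv.ofAlgHom (scaleVar c) (scaleVar c⁻¹)
    (by rw [scaleVar_comp, mul_inv_cancel, scaleVar_id])
    (by rw [scaleVar_comp, inv_mul_cancel, scaleVar_id])

theorem scaleVarEquiv_apply (c : kˣ) (p : LaurentPolynomial k) :
    scaleVarEquiv c p = scaleVar c p := rfl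


/-- `R = k[t,t⁻¹]`, identified with the `k`-subalgebra of `S = k[z,z⁻¹]` generated by
`t = z^m` and `t⁻¹ = z^{-m}`. -/
def Rsub (k : Type*) [Field k] (m : ℕ) : Subalgebra k (LaurentPolynomial k) :=
  Algebra.adjoin k {T (m : ℤ), T (-(m : ℤ))}

/-- `g(S) = g ⊗_k S` is a Lie algebra over `k` (by restriction from `S`). -/
instance instLieAlgebraTensorBase : LieAlgebra k (LaurentPolynomial k ⊗[k] g) where
  lie_smul c x y := by
    have h := lie_smul (algebraMap k (LaurentPolynomial k) c) x y
    rwa [algebraMap_smul, algebraMap_smul] at h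

/-- The underlying submodule `⊕_{i ∈ ℤ} g_ī ⊗ z^i` of the loop algebra. -/
def loopCarrier (ζ : k) (σ : g ≃ₗ[k] g) : Submodule k (LaurentPolynomial k ⊗[k] g) :=
  Submodule.span k {p | ∃ (i : ℤ) (x : g), σ x = ζ ^ i • x ∧ p = T i ⊗ₜ[k] x}

theorem loop_lie_mem {ζ : k} (hζ0 : ζ ≠ 0) {σ : g ≃ₗ[k] g} (hbr : IsLieAut σ)
    {x y : LaurentPolynomial k ⊗[k] g} (hx : x ∈ loopCarrier ζ σ) (hy : y ∈ loopCarrier ζ σ) :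
    ⁅x, y⁆ ∈ loopCarrier ζ σ := by
  have key : ∀ p ∈ {p : LaurentPolynomial k ⊗[k] g |
      ∃ (i : ℤ) (x : g), σ x = ζ ^ i • x ∧ p = T i ⊗ₜ[k] x},
      ∀ q, q ∈ loopCarrier ζ σ → ⁅p, q⁆ ∈ loopCarrier ζ σ := by
    rintro p ⟨i, a, ha, rfl⟩ q hq
    unfold loopCarrier at hq ⊢
    induction hq using Submodule.span_induction with
    | mem q hq =>
      obtain ⟨j, b, hb, rfl⟩ := hq
      rw [LieAlgebra.ExtendScalars.bracket_tmul, ← T_add]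
      refine Submodule.subset_span ⟨i + j, ⁅a, b⁆, ?_, rfl⟩
      rw [hbr, ha, hb, smul_lie, lie_smul, smul_smul, ← zpow_add₀ hζ0]
    | zero =>
      have h0 : ⁅(T i ⊗ₜ[k] a : LaurentPolynomial k ⊗[k] g), (0 : LaurentPolynomial k ⊗[k] g)⁆ = 0 :=
        lie_zero (T i ⊗ₜ[k] a : LaurentPolynomial k ⊗[k] g)
      rw [h0]; exact zero_mem _
    | add q r _ _ hq hr =>
      have h0 : ⁅(T i ⊗ₜ[k] a : LaurentPolynomial k ⊗[k] g), q + r⁆ = ⁅T i ⊗ₜ[k] a, q⁆ + ⁅T i ⊗ₜ[k] a, r⁆ :=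
        lie_add (T i ⊗ₜ[k] a : LaurentPolynomial k ⊗[k] g) q r
      rw [h0]; exact add_mem hq hr
    | smul c q _ hq =>
      have h0 : ⁅(T i ⊗ₜ[k] a : LaurentPolynomial k ⊗[k] g), c • q⁆ = c • ⁅T i ⊗ₜ[k] a, q⁆ :=
        lie_smul c (T i ⊗ₜ[k] a : LaurentPolynomial k ⊗[k] g) q
      rw [h0]; exact Submodule.smul_mem _ _ hq
  unfold loopCarrier at hx
  induction hx using Submodule.span_induction with
  | mem p hp => exact key p hp y hy
  | zero =>
    have h0 : ⁅(0 : LaurentPolynomial k ⊗[k] g), y⁆ = 0 := zero_lie y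
    rw [h0]; exact zero_mem _
  | add p r _ _ hp hr =>
    have h0 : ⁅p + r, y⁆ = ⁅p, y⁆ + ⁅r, y⁆ := add_lie p r y
    rw [h0]; exact add_mem hp hr
  | smul c p _ hp =>
    have h0 : ⁅c • p, y⁆ = c • ⁅p, y⁆ := smul_lie c p y
    rw [h0]; exact Submodule.smul_mem _ _ hp

/-- The loop algebra `L(g,σ) = ⊕_{i ∈ ℤ} g_ī ⊗ z^i`, a Lie subalgebra (over `k`)
of `g(S) = g ⊗_k S`.  Here `m` is a period of `σ` and `ζ` is the chosen root of unity. -/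
def loopAlgebra (m : ℕ) (ζ : k) (hζ0 : ζ ≠ 0) (hζm : ζ ^ m = 1) (σ : g ≃ₗ[k] g)
    (hbr : IsLieAut σ) (hσ : σ ^ m = 1) : LieSubalgebra k (LaurentPolynomial k ⊗[k] g) where
  __ := loopCarrier ζ σ
  lie_mem' := fun hx hy => loop_lie_mem hζ0 hbr hx hy

theorem mem_loopAlgebra_iff {m : ℕ} {ζ : k} {hζ0 : ζ ≠ 0} {hζm : ζ ^ m = 1} {σ : g ≃ₗ[k] g}
    {hbr : IsLieAut σ} {hσ : σ ^ m = 1} {x : LaurentPolynomial k ⊗[k] g} :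
    x ∈ loopAlgebra m ζ hζ0 hζm σ hbr hσ ↔ x ∈ loopCarrier ζ σ := Iff.rfl

theorem T_smul_loop {ζ : k} (hζ0 : ζ ≠ 0) {σ : g ≃ₗ[k] g} {j : ℤ} (hj : ζ ^ j = 1)
    {x : LaurentPolynomial k ⊗[k] g} (hx : x ∈ loopCarrier ζ σ) :
    (T j : LaurentPolynomial k) • x ∈ loopCarrier ζ σ := by
  unfold loopCarrier at hx ⊢
  induction hx using Submodule.span_induction with
  | mem p hp =>
    obtain ⟨i, a, ha, rfl⟩ := hp
    rw [TensorProduct.smul_tmul', smul_eq_mul, ← T_add]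
    refine Submodule.subset_span ⟨j + i, a, ?_, rfl⟩
    rw [ha, zpow_add₀ hζ0, hj, one_mul]
  | zero => rw [smul_zero]; exact zero_mem _
  | add p q _ _ hp hq => rw [smul_add]; exact add_mem hp hq
  | smul c p _ hp =>
    rw [smul_comm]
    exact Submodule.smul_mem _ _ hp

theorem Rsub_smul_loop {m : ℕ} {ζ : k} (hζ0 : ζ ≠ 0) (hζm : ζ ^ m = 1) {σ : g ≃ₗ[k] g}
    {r : LaurentPolynomial k} (hr : r ∈ Rsub k m) :
    ∀ x ∈ loopCarrier ζ σ, r • x ∈ loopCarrier (g := g) ζ σ := by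
  induction hr using Algebra.adjoin_induction with
  | mem s hs =>
    intro x hx
    rcases hs with rfl | rfl
    · refine T_smul_loop hζ0 ?_ hx
      rw [zpow_natCast, hζm]
    · refine T_smul_loop hζ0 ?_ hx
      rw [zpow_neg, zpow_natCast, hζm, inv_one]
  | algebraMap c =>
    intro x hx
    rw [algebraMap_smul]
    exact Submodule.smul_mem _ _ hx
  | add r s _ _ hr hs =>
    intro x hx
    rw [add_smul]
    exact add_mem (hr x hx) (hs x hx)
  | mul r s _ _ hr hs =>
    intro x hx
    rw [mul_smul]
    exact hr _ (hs x hx)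


/-- The action of `R` on the loop algebra. -/
instance loopSMulR {m : ℕ} {ζ : k} {hζ0 : ζ ≠ 0} {hζm : ζ ^ m = 1} {σ : g ≃ₗ[k] g}
    {hbr : IsLieAut σ} {hσ : σ ^ m = 1} :
    SMul ↥(Rsub k m) ↥(loopAlgebra m ζ hζ0 hζm σ hbr hσ) where
  smul r x := ⟨(r : LaurentPolynomial k) • (x : LaurentPolynomial k ⊗[k] g),
    Rsub_smul_loop hζ0 hζm r.2 _ x.2⟩

theorem loop_smul_coe {m : ℕ} {ζ : k} {hζ0 : ζ ≠ 0} {hζm : ζ ^ m = 1} {σ : g ≃ₗ[k] g}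
    {hbr : IsLieAut σ} {hσ : σ ^ m = 1} (r : ↥(Rsub k m))
    (x : ↥(loopAlgebra m ζ hζ0 hζm σ hbr hσ)) :
    ((r • x : ↥(loopAlgebra m ζ hζ0 hζm σ hbr hσ)) : LaurentPolynomial k ⊗[k] g)
      = (r : LaurentPolynomial k) • (x : LaurentPolynomial k ⊗[k] g) := rfl

/-- The loop algebra is a module over `R = k[t,t⁻¹] ⊆ k[z,z⁻¹]`. -/
instance loopModuleR {m : ℕ} {ζ : k} {hζ0 : ζ ≠ 0} {hζm : ζ ^ m = 1} {σ : g ≃ₗ[k] g}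
    {hbr : IsLieAut σ} {hσ : σ ^ m = 1} :
    Module ↥(Rsub k m) ↥(loopAlgebra m ζ hζ0 hζm σ hbr hσ) where
  one_smul x := Subtype.ext (by simp [loop_smul_coe])
  mul_smul r s x := Subtype.ext (by simp [loop_smul_coe, mul_smul])
  smul_zero r := Subtype.ext (by simp [loop_smul_coe])
  smul_add r x y := Subtype.ext (by simp [loop_smul_coe, smul_add])
  add_smul r s x := Subtype.ext (by simp [loop_smul_coe, add_smul])
  zero_smul x := Subtype.ext (by simp [loop_smul_coe])


/-- The inclusion of the loop algebra in `g(S)`, as an `R`-linear map. -/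
def loopIncl (m : ℕ) (ζ : k) (hζ0 : ζ ≠ 0) (hζm : ζ ^ m = 1) (σ : g ≃ₗ[k] g)
    (hbr : IsLieAut σ) (hσ : σ ^ m = 1) :
    ↥(loopAlgebra m ζ hζ0 hζm σ hbr hσ) →ₗ[↥(Rsub k m)] (LaurentPolynomial k ⊗[k] g) where
  toFun x := ↑x
  map_add' _ _ := rfl
  map_smul' _ _ := rfl

/-- The eigenspace `{x ∈ g : σ(x) = c x}`. -/
def eigSpace (σ : g ≃ₗ[k] g) (c : k) : Submodule k g where
  carrier := {x | σ x = c • x}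
  add_mem' := by
    intro x y hx hy
    show σ (x + y) = c • (x + y)
    rw [map_add, hx, hy, smul_add]
  zero_mem' := by
    show σ 0 = c • (0 : g)
    rw [map_zero, smul_zero]
  smul_mem' := by
    intro t x hx
    show σ (t • x) = c • t • x
    rw [map_smul, hx, smul_comm]

/-- The `R`-algebra automorphism `id ⊗ ι_i` of `g(S)`, where `ι_i(z) = ζ^i z`. -/
def idTensorIota (ζ : k) (hζ0 : ζ ≠ 0) (i : ℤ) :
    (LaurentPolynomial k ⊗[k] g) ≃ₗ[k] (LaurentPolynomial k ⊗[k] g) :=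
  TensorProduct.congr (scaleVarEquiv (Units.mk0 ζ hζ0 ^ i)).toLinearEquiv (LinearEquiv.refl k g)

/-- A `k`-linear automorphism of `g(S)` lies in `Aut_S(g(S))` if it is `S`-linear and
preserves brackets. -/
def IsSAut (f : (LaurentPolynomial k ⊗[k] g) ≃ₗ[k] (LaurentPolynomial k ⊗[k] g)) : Prop :=
  (∀ (s : LaurentPolynomial k) (x : LaurentPolynomial k ⊗[k] g), f (s • x) = s • f x) ∧
    ∀ x y : LaurentPolynomial k ⊗[k] g, f ⁅x, y⁆ = ⁅f x, f y⁆

/-- The action of `ī ∈ Γ = ℤ/mℤ` on `Aut_S(g(S))`:  `ⁱτ = (id ⊗ ι_i) ∘ τ ∘ (id ⊗ ι_i)⁻¹`. -/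
def gammaAct (ζ : k) (hζ0 : ζ ≠ 0) (i : ℤ)
    (τ : (LaurentPolynomial k ⊗[k] g) ≃ₗ[k] (LaurentPolynomial k ⊗[k] g)) :
    (LaurentPolynomial k ⊗[k] g) ≃ₗ[k] (LaurentPolynomial k ⊗[k] g) :=
  ((idTensorIota (g := g) ζ hζ0 i).symm.trans τ).trans (idTensorIota ζ hζ0 i)

/-- A family `u_ī`, `ī ∈ Γ = ℤ/mℤ` (presented as a function on integer representatives),
is a 1-cocycle on `Γ` in `Aut_S(g(S))` if each `u_i` is an `S`-algebra automorphism,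
`u_i` depends only on `i` mod `m`, and `u_{i+j} = u_i ∘ ⁱ(u_j)`. -/
def IsCocycle (m : ℕ) (ζ : k) (hζ0 : ζ ≠ 0)
    (u : ℤ → ((LaurentPolynomial k ⊗[k] g) ≃ₗ[k] (LaurentPolynomial k ⊗[k] g))) : Prop :=
  (∀ i : ℤ, IsSAut (u i)) ∧ (∀ i j : ℤ, (i : ZMod m) = (j : ZMod m) → u i = u j) ∧
    ∀ i j : ℤ, u (i + j) = (gammaAct ζ hζ0 i (u j)).trans (u i)

/-- The fixed point set `g(S)_u = {x : (u_ī ∘ (id ⊗ ι_i)) x = x for all ī}` of a 1-cocycle. -/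
def cocycleFixed (ζ : k) (hζ0 : ζ ≠ 0)
    (u : ℤ → ((LaurentPolynomial k ⊗[k] g) ≃ₗ[k] (LaurentPolynomial k ⊗[k] g))) :
    Set (LaurentPolynomial k ⊗[k] g) :=
  {x | ∀ i : ℤ, u i (idTensorIota ζ hζ0 i x) = x}


end LoopPaper

/-!
Write `σ = u_1̄ ∘ (id ⊗ ι_1)`. The cocycle identity says exactly that `i ↦ u_ī ∘ (id ⊗ ι_i)` is a
homomorphism `ℤ → Aut_k(g(S))`; it kills `m`, so `σ ^ m = 1` and `g(S)_u` is the fixed space of `σ`.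
As `σ` is `ι_1`-semilinear over `S` and preserves brackets, `g(S)_u` is stable under brackets and
under `R = S^{ι_1}`. Since `m` is invertible in `k`, the discrete Fourier sums
`m⁻¹ ∑_{i<m} ζ^{-ij} σ^i` split `g(S)` into the `ζ^j`-eigenspaces of `σ` (`j < m`), and `z^j` maps
`g(S)_u` bijectively onto the `ζ^j`-eigenspace. This is the decomposition `x = ∑ z^j y_j`; together
with `S = ∑_{j<m} R z^j` it makes `S ⊗_R g(S)_u → g(S)` bijective.
-/

theorem sum_range_pow_eq_zero_of_pow_eq_one {k : Type*} [Field k] {w : k} {m : ℕ}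
    (hw : w ^ m = 1) (hw1 : w ≠ 1) : ∑ i ∈ Finset.range m, w ^ i = 0 := by
  have h := mul_geom_sum w m
  rw [hw, sub_self, mul_eq_zero] at h
  exact h.resolve_left (sub_ne_zero.2 hw1)

namespace TensorProduct

theorem exists_eq_sum_tmul_of_span_eq_top {R M N ι : Type*} [CommRing R] [AddCommGroup M]
    [Module R M] [AddCommGroup N] [Module R N] [Fintype ι] (b : ι → M)
    (hb : Submodule.span R (Set.range b) = ⊤) (x : M ⊗[R] N) :
    ∃ n : ι → N, x = ∑ i, b i ⊗ₜ n i := by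
  let φ : (ι → N) →ₗ[R] M ⊗[R] N := ∑ i, (TensorProduct.mk R M N (b i)).comp (LinearMap.proj i)
  have hφ : ∀ n, φ n = ∑ i, b i ⊗ₜ n i := fun n => by simp [φ]
  suffices LinearMap.range φ = ⊤ by
    obtain ⟨n, hn⟩ := LinearMap.range_eq_top.1 this x
    exact ⟨n, by rw [← hn, hφ]⟩
  rw [eq_top_iff, ← span_tmul_eq_top, Submodule.span_le]
  rintro _ ⟨y, z, rfl⟩
  obtain ⟨c, rfl⟩ := (Submodule.mem_span_range_iff_exists_fun R).1 (hb ▸ Submodule.mem_top : y ∈ _)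
  exact ⟨fun i => c i • z, by simp [hφ, sum_tmul, smul_tmul]⟩

section AlgEquivRefl

variable {k A L : Type*} [CommRing k] [CommRing A] [Algebra k A] (e : A ≃ₐ[k] A)

theorem congr_algEquiv_refl_smul [AddCommGroup L] [Module k L] (a : A) (x : A ⊗[k] L) :
    congr e.toLinearEquiv (LinearEquiv.refl k L) (a • x) =
      e a • congr e.toLinearEquiv (LinearEquiv.refl k L) x := by
  induction x using TensorProduct.induction_on with
  | zero => simp
  | tmul b y => simp [smul_tmul']
  | add x y hx hy => simp only [smul_add, map_add, hx, hy]

theorem congr_algEquiv_refl_lie [LieRing L] [LieAlgebra k L] (x y : A ⊗[k] L) :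
    congr e.toLinearEquiv (LinearEquiv.refl k L) ⁅x, y⁆ =
      ⁅congr e.toLinearEquiv (LinearEquiv.refl k L) x,
        congr e.toLinearEquiv (LinearEquiv.refl k L) y⁆ := by
  induction x using TensorProduct.induction_on with
  | zero => simp
  | tmul a z =>
    induction y using TensorProduct.induction_on with
    | zero => simp
    | tmul b w => simp [LieAlgebra.ExtendScalars.bracket_tmul]
    | add y y' hy hy' => simp only [lie_add, map_add, hy, hy']
  | add x x' hx hx' => simp only [add_lie, map_add, hx, hx']

end AlgEquivRefl

end TensorProduct

theorem LinearMap.liftBaseChange_subtype_bijective {R S N ι : Type*} [CommRing R] [CommRing S]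
    [Algebra R S] [AddCommGroup N] [Module R N] [Module S N] [IsScalarTower R S N] [Fintype ι]
    {b : ι → S} (hb : Submodule.span R (Set.range b) = ⊤) {F : Submodule R N}
    (h : ∀ x : N, ∃! y : ι → N, (∀ i, y i ∈ F) ∧ x = ∑ i, b i • y i) :
    Function.Bijective (LinearMap.liftBaseChange S F.subtype) := by
  have hsum : ∀ y : ι → F,
      liftBaseChange S F.subtype (∑ i, b i ⊗ₜ y i) = ∑ i, b i • (y i : N) := by
    simp
  constructor
  · intro w w' hw
    obtain ⟨y, rfl⟩ := TensorProduct.exists_eq_sum_tmul_of_span_eq_top b hb w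
    obtain ⟨y', rfl⟩ := TensorProduct.exists_eq_sum_tmul_of_span_eq_top b hb w'
    rw [hsum, hsum] at hw
    have hyy := (h _).unique ⟨fun i => (y i).2, rfl⟩ ⟨fun i => (y' i).2, hw⟩
    rw [show y = y' from funext fun i => Subtype.ext (congrFun hyy i)]
  · intro x
    obtain ⟨y, ⟨hyF, rfl⟩, -⟩ := h x
    exact ⟨∑ i, b i ⊗ₜ ⟨y i, hyF i⟩, hsum _⟩

namespace Module.End

variable {k M : Type*} [Field k] [AddCommGroup M] [Module k M]

def eigenProj (σ : Module.End k M) (m : ℕ) (ζ : k) (j : ℕ) : Module.End k M :=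
  (m : k)⁻¹ • ∑ i ∈ Finset.range m, (ζ⁻¹ ^ j) ^ i • σ ^ i

variable {σ : Module.End k M} {m : ℕ} {ζ : k}

theorem pow_apply_of_apply_eq_smul {μ : k} {v : M} (hv : σ v = μ • v) (n : ℕ) :
    (σ ^ n) v = μ ^ n • v := by
  induction n with
  | zero => simp
  | succ n ih => rw [pow_succ', mul_apply, ih, map_smul, hv, smul_smul, pow_succ]

theorem eigenProj_apply_of_apply_eq_smul {μ : k} {v : M} (hv : σ v = μ • v) (j : ℕ) :
    eigenProj σ m ζ j v = ((m : k)⁻¹ * ∑ i ∈ Finset.range m, (ζ⁻¹ ^ j * μ) ^ i) • v := by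
  simp [eigenProj, LinearMap.sum_apply, pow_apply_of_apply_eq_smul hv, Finset.mul_sum,
    Finset.sum_smul, Finset.smul_sum, smul_smul, mul_pow, mul_assoc]

theorem mul_eigenProj (hσ : σ ^ m = 1) (hζ : ζ ^ m = 1) (hζ0 : ζ ≠ 0) (j : ℕ) :
    σ * eigenProj σ m ζ j = ζ ^ j • eigenProj σ m ζ j := by
  set f : ℕ → Module.End k M := fun i => (ζ⁻¹ ^ j) ^ i • σ ^ i with hf
  have hw : ζ ^ j * ζ⁻¹ ^ j = 1 := by rw [← mul_pow, mul_inv_cancel₀ hζ0, one_pow]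
  have hshift : ∀ i, σ * f i = ζ ^ j • f (i + 1) := fun i => by
    rw [hf, mul_smul_comm, ← pow_succ', smul_smul, pow_succ (ζ⁻¹ ^ j) i, mul_left_comm, hw,
      mul_one]
  have hper : f m = f 0 := by
    have hwm : (ζ⁻¹ ^ j) ^ m = 1 := by
      rw [← pow_mul, mul_comm, pow_mul, inv_pow, hζ, inv_one, one_pow]
    simp only [hf, hσ, hwm, pow_zero]
  have hrot : ∑ i ∈ Finset.range m, f (i + 1) = ∑ i ∈ Finset.range m, f i := by
    have h := (Finset.sum_range_succ' f m).symm.trans (Finset.sum_range_succ f m)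
    rwa [hper, add_left_inj] at h
  change σ * ((m : k)⁻¹ • ∑ i ∈ Finset.range m, f i) =
    ζ ^ j • ((m : k)⁻¹ • ∑ i ∈ Finset.range m, f i)
  rw [mul_smul_comm, Finset.mul_sum, Finset.sum_congr rfl fun i _ => hshift i, ← Finset.smul_sum,
    hrot, smul_comm]

theorem mem_eigenspace_eigenProj (hσ : σ ^ m = 1) (hζ : ζ ^ m = 1) (hζ0 : ζ ≠ 0) (j : ℕ)
    (x : M) : eigenProj σ m ζ j x ∈ eigenspace σ (ζ ^ j) :=
  mem_eigenspace_iff.2 (LinearMap.congr_fun (mul_eigenProj hσ hζ hζ0 j) x)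

theorem eigenProj_apply_self (hm : (m : k) ≠ 0) (hζ0 : ζ ≠ 0) {j : ℕ} {v : M}
    (hv : v ∈ eigenspace σ (ζ ^ j)) : eigenProj σ m ζ j v = v := by
  rw [eigenProj_apply_of_apply_eq_smul (mem_eigenspace_iff.1 hv), ← mul_pow,
    inv_mul_cancel₀ hζ0, one_pow]
  simp [hm]

theorem eigenProj_apply_of_ne (hζ : ζ ^ m = 1) {j : ℕ} {μ : k} (hμ : μ ^ m = 1)
    (hμj : μ ≠ ζ ^ j) {v : M} (hv : v ∈ eigenspace σ μ) : eigenProj σ m ζ j v = 0 := by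
  have hw : (ζ⁻¹ ^ j * μ) ^ m = 1 := by
    rw [mul_pow, hμ, mul_one, ← pow_mul, mul_comm j m, pow_mul, inv_pow, hζ, inv_one, one_pow]
  have hw1 : ζ⁻¹ ^ j * μ ≠ 1 := fun h =>
    hμj (eq_of_inv_mul_eq_one (by rwa [inv_pow] at h)).symm
  rw [eigenProj_apply_of_apply_eq_smul (mem_eigenspace_iff.1 hv),
    sum_range_pow_eq_zero_of_pow_eq_one hw hw1, mul_zero, zero_smul]

theorem sum_eigenProj (hζ : IsPrimitiveRoot ζ m) (hm : (m : k) ≠ 0) :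
    ∑ j ∈ Finset.range m, eigenProj σ m ζ j = 1 := by
  have hm0 : 0 < m := Nat.pos_of_ne_zero (by rintro rfl; exact hm Nat.cast_zero)
  have hgeom : ∀ i ∈ Finset.range m, i ≠ 0 → ∑ j ∈ Finset.range m, (ζ⁻¹ ^ i) ^ j = 0 :=
    fun i hi hi0 => sum_range_pow_eq_zero_of_pow_eq_one
      (by rw [← pow_mul, mul_comm, pow_mul, hζ.inv.pow_eq_one, one_pow])
      (hζ.inv.pow_ne_one_of_pos_of_lt hi0 (Finset.mem_range.1 hi))
  calc ∑ j ∈ Finset.range m, eigenProj σ m ζ j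
      = (m : k)⁻¹ • ∑ i ∈ Finset.range m, (∑ j ∈ Finset.range m, (ζ⁻¹ ^ i) ^ j) • σ ^ i := by
        simp only [eigenProj, ← Finset.smul_sum, Finset.sum_smul]
        rw [Finset.sum_comm]
        simp only [← pow_mul, mul_comm]
    _ = 1 := by
        rw [Finset.sum_eq_single_of_mem 0 (Finset.mem_range.2 hm0) fun i hi hi0 => by
          rw [hgeom i hi hi0, zero_smul]]
        simp [hm]

theorem eigenProj_sum_of_mem_eigenspace (hζ : IsPrimitiveRoot ζ m) (hm : (m : k) ≠ 0)
    (v : Fin m → M) (hv : ∀ j : Fin m, v j ∈ eigenspace σ (ζ ^ (j : ℕ))) (l : Fin m) :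
    eigenProj σ m ζ l (∑ j, v j) = v l := by
  have hζ0 : ζ ≠ 0 := hζ.ne_zero (by rintro rfl; exact hm Nat.cast_zero)
  have hpow : ∀ j : ℕ, (ζ ^ j) ^ m = 1 := fun j => by
    rw [← pow_mul, mul_comm, pow_mul, hζ.pow_eq_one, one_pow]
  rw [map_sum, Finset.sum_eq_single_of_mem l (Finset.mem_univ l) fun j _ hjl =>
    eigenProj_apply_of_ne hζ.pow_eq_one (hpow j)
      (fun h => hjl (Fin.ext (hζ.pow_inj j.2 l.2 h))) (hv j)]
  exact eigenProj_apply_self hm hζ0 (hv l)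

end Module.End

namespace LoopPaper

variable {k : Type*} [Field k] {g : Type*} [LieRing g] [LieAlgebra k g]

theorem scaleVarEquiv_T (c : kˣ) (n : ℤ) :
    scaleVarEquiv c (T n) = ((c ^ n : kˣ) : k) • T n :=
  scaleVar_T c n

theorem scaleVarEquiv_mul (c d : kˣ) :
    scaleVarEquiv (k := k) (c * d) = scaleVarEquiv c * scaleVarEquiv d :=
  AlgEquiv.ext fun s => (AlgHom.congr_fun (scaleVar_comp c d) s).symm

theorem scaleVarEquiv_one : scaleVarEquiv (1 : kˣ) = (1 : LaurentPolynomial k ≃ₐ[k] _) :=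
  AlgEquiv.ext fun s => AlgHom.congr_fun scaleVar_id s

theorem T_mul_mem_Rsub (m : ℕ) (q : ℤ) : (T (m * q) : LaurentPolynomial k) ∈ Rsub k m := by
  have hpos : (T m : LaurentPolynomial k) ∈ Rsub k m := Algebra.subset_adjoin (by simp)
  have hneg : (T (-m) : LaurentPolynomial k) ∈ Rsub k m := Algebra.subset_adjoin (by simp)
  induction q using Int.induction_on with
  | zero => rw [mul_zero, T_zero]; exact one_mem _
  | succ q ih => rw [mul_add, mul_one, T_add]; exact mul_mem ih hpos
  | pred q ih =>
    rw [show (m : ℤ) * (-q - 1) = m * -q + -m by ring, T_add]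
    exact mul_mem ih hneg

theorem scaleVarEquiv_apply_of_mem_Rsub {m : ℕ} {c : kˣ} (hc : c ^ m = 1)
    {r : LaurentPolynomial k} (hr : r ∈ Rsub k m) : scaleVarEquiv c r = r := by
  suffices Rsub k m ≤ AlgHom.equalizer (scaleVarEquiv c : _ →ₐ[k] _) (AlgHom.id k _) from this hr
  refine Algebra.adjoin_le ?_
  rintro _ (rfl | rfl) <;> simp [scaleVarEquiv_T, hc]

theorem span_T_eq_top {m : ℕ} (hm : 0 < m) :
    Submodule.span (Rsub k m) (Set.range fun j : Fin m => (T j : LaurentPolynomial k)) = ⊤ := by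
  refine Submodule.eq_top_iff'.2 fun p => ?_
  induction p using LaurentPolynomial.induction_on' with
  | add p q hp hq => exact add_mem hp hq
  | C_mul_T n a =>
    have hmz : (0 : ℤ) < m := by exact_mod_cast hm
    have hr : ((n % m).toNat : ℤ) = n % m := Int.toNat_of_nonneg (Int.emod_nonneg n hmz.ne')
    have hrm : (n % m).toNat < m := by have := Int.emod_lt_of_pos n hmz; omega
    have hcoeff : C a * T (m * (n / m)) ∈ Rsub k m :=
      mul_mem (by rw [C_eq_algebraMap]; exact Subalgebra.algebraMap_mem _ a) (T_mul_mem_Rsub m _)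
    have hsplit : C a * T n = (⟨_, hcoeff⟩ : Rsub k m) •
        (T ((⟨(n % m).toNat, hrm⟩ : Fin m) : ℕ) : LaurentPolynomial k) := by
      rw [Subalgebra.smul_def, smul_eq_mul, mul_assoc, ← T_add, Fin.val_mk, hr,
        Int.mul_ediv_add_emod]
    rw [hsplit]
    exact Submodule.smul_mem _ _ (Submodule.subset_span ⟨_, rfl⟩)

section TwistedAction

variable {ζ : k} {hζ0 : ζ ≠ 0}

theorem idTensorIota_add (i j : ℤ) :
    idTensorIota (g := g) ζ hζ0 (i + j) = idTensorIota ζ hζ0 i * idTensorIota ζ hζ0 j :=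
  LinearEquiv.toLinearMap_injective <| TensorProduct.ext' fun s x => by
    simp [idTensorIota, zpow_add, scaleVarEquiv_mul, AlgEquiv.mul_apply]

theorem idTensorIota_eq_one_of_pow_eq_one {m : ℕ} (hζm : ζ ^ m = 1) :
    idTensorIota (g := g) ζ hζ0 m = 1 := by
  have hc : Units.mk0 ζ hζ0 ^ (m : ℤ) = 1 := Units.ext (by simp [hζm])
  rw [idTensorIota, hc, scaleVarEquiv_one]
  exact TensorProduct.congr_refl_refl

theorem idTensorIota_smul (i : ℤ) (s : LaurentPolynomial k) (x : LaurentPolynomial k ⊗[k] g) :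
    idTensorIota ζ hζ0 i (s • x) =
      scaleVarEquiv (Units.mk0 ζ hζ0 ^ i) s • idTensorIota ζ hζ0 i x :=
  TensorProduct.congr_algEquiv_refl_smul _ s x

theorem idTensorIota_lie (i : ℤ) (x y : LaurentPolynomial k ⊗[k] g) :
    idTensorIota ζ hζ0 i ⁅x, y⁆ = ⁅idTensorIota ζ hζ0 i x, idTensorIota ζ hζ0 i y⁆ :=
  TensorProduct.congr_algEquiv_refl_lie _ x y

variable (ζ hζ0) in
def twistedAction (u : ℤ → ((LaurentPolynomial k ⊗[k] g) ≃ₗ[k] (LaurentPolynomial k ⊗[k] g)))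
    (i : ℤ) : (LaurentPolynomial k ⊗[k] g) ≃ₗ[k] (LaurentPolynomial k ⊗[k] g) :=
  u i * idTensorIota ζ hζ0 i

variable {m : ℕ} {u : ℤ → ((LaurentPolynomial k ⊗[k] g) ≃ₗ[k] (LaurentPolynomial k ⊗[k] g))}

namespace IsCocycle

-- Bracketed as `gammaAct` unfolds, so that the kernel checks this by unfolding `*` alone.
theorem apply_add (hu : IsCocycle m ζ hζ0 u) (i j : ℤ) :
    u (i + j) = u i * (idTensorIota ζ hζ0 i * (u j * (idTensorIota ζ hζ0 i)⁻¹)) :=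
  hu.2.2 i j

theorem apply_zero (hu : IsCocycle m ζ hζ0 u) : u 0 = 1 := by
  have h := hu.apply_add 0 0
  rwa [add_zero, (mul_eq_left (a := idTensorIota (g := g) ζ hζ0 0)).1
    (idTensorIota_add (g := g) 0 0).symm, inv_one, mul_one, one_mul, left_eq_mul] at h

theorem twistedAction_add (hu : IsCocycle m ζ hζ0 u) (i j : ℤ) :
    twistedAction ζ hζ0 u (i + j) = twistedAction ζ hζ0 u i * twistedAction ζ hζ0 u j := by
  simp only [twistedAction, hu.apply_add, idTensorIota_add]
  group

theorem twistedAction_eq_zpow (hu : IsCocycle m ζ hζ0 u) (i : ℤ) :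
    twistedAction ζ hζ0 u i = twistedAction ζ hζ0 u 1 ^ i := by
  let ρ : Multiplicative ℤ →* _ :=
    MonoidHom.mk' (fun i => twistedAction ζ hζ0 u i.toAdd) fun _ _ => hu.twistedAction_add _ _
  simpa [ρ] using ρ.map_zpow (Multiplicative.ofAdd 1) i

theorem twistedAction_pow_eq_one (hu : IsCocycle m ζ hζ0 u) (hζm : ζ ^ m = 1) :
    twistedAction ζ hζ0 u 1 ^ m = 1 := by
  rw [← zpow_natCast, ← hu.twistedAction_eq_zpow, twistedAction,
    idTensorIota_eq_one_of_pow_eq_one hζm, hu.2.1 m 0 (by simp), hu.apply_zero, one_mul]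

theorem mem_cocycleFixed_iff (hu : IsCocycle m ζ hζ0 u) {x : LaurentPolynomial k ⊗[k] g} :
    x ∈ cocycleFixed ζ hζ0 u ↔ twistedAction ζ hζ0 u 1 x = x := by
  refine ⟨fun hx => hx 1, fun hx i => ?_⟩
  have hstab : twistedAction ζ hζ0 u 1 ∈ MulAction.stabilizer _ x := hx
  have := (MulAction.stabilizer _ x).zpow_mem hstab i
  rwa [← hu.twistedAction_eq_zpow] at this

theorem twistedAction_smul (hu : IsCocycle m ζ hζ0 u) (i : ℤ) (s : LaurentPolynomial k)
    (x : LaurentPolynomial k ⊗[k] g) :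
    twistedAction ζ hζ0 u i (s • x) =
      scaleVarEquiv (Units.mk0 ζ hζ0 ^ i) s • twistedAction ζ hζ0 u i x := by
  rw [twistedAction, LinearEquiv.mul_apply, idTensorIota_smul, (hu.1 i).1]
  rfl

theorem twistedAction_lie (hu : IsCocycle m ζ hζ0 u) (i : ℤ)
    (x y : LaurentPolynomial k ⊗[k] g) :
    twistedAction ζ hζ0 u i ⁅x, y⁆ = ⁅twistedAction ζ hζ0 u i x, twistedAction ζ hζ0 u i y⁆ := by
  rw [twistedAction, LinearEquiv.mul_apply, idTensorIota_lie, (hu.1 i).2]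
  rfl

theorem smul_mem_cocycleFixed (hu : IsCocycle m ζ hζ0 u) (hζm : ζ ^ m = 1)
    {r : LaurentPolynomial k} (hr : r ∈ Rsub k m) {x : LaurentPolynomial k ⊗[k] g}
    (hx : x ∈ cocycleFixed ζ hζ0 u) : r • x ∈ cocycleFixed ζ hζ0 u := by
  have hc : Units.mk0 ζ hζ0 ^ m = 1 := Units.ext (by simp [hζm])
  rw [hu.mem_cocycleFixed_iff] at hx ⊢
  rw [hu.twistedAction_smul, zpow_one, scaleVarEquiv_apply_of_mem_Rsub hc hr, hx]

theorem lie_mem_cocycleFixed (hu : IsCocycle m ζ hζ0 u) {x y : LaurentPolynomial k ⊗[k] g}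
    (hx : x ∈ cocycleFixed ζ hζ0 u) (hy : y ∈ cocycleFixed ζ hζ0 u) :
    ⁅x, y⁆ ∈ cocycleFixed ζ hζ0 u := by
  rw [hu.mem_cocycleFixed_iff] at hx hy ⊢
  rw [hu.twistedAction_lie, hx, hy]

theorem T_smul_mem_eigenspace_iff (hu : IsCocycle m ζ hζ0 u) (n : ℕ)
    (y : LaurentPolynomial k ⊗[k] g) :
    (T n : LaurentPolynomial k) • y ∈
        Module.End.eigenspace (twistedAction ζ hζ0 u 1).toLinearMap (ζ ^ n) ↔
      y ∈ cocycleFixed ζ hζ0 u := by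
  rw [Module.End.mem_eigenspace_iff, hu.mem_cocycleFixed_iff, LinearEquiv.coe_coe,
    hu.twistedAction_smul, scaleVarEquiv_T, smul_assoc, zpow_one]
  simp only [zpow_natCast, Units.val_pow_eq_pow_val, Units.val_mk0]
  rw [smul_right_inj (pow_ne_zero n hζ0), (isUnit_T _).smul_left_cancel]

theorem existsUnique_sum_T_smul (hu : IsCocycle m ζ hζ0 u) (hζ : IsPrimitiveRoot ζ m)
    (hm : (m : k) ≠ 0) (x : LaurentPolynomial k ⊗[k] g) :
    ∃! y : Fin m → LaurentPolynomial k ⊗[k] g, (∀ i, y i ∈ cocycleFixed ζ hζ0 u) ∧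
      x = ∑ i : Fin m, (T (i : ℤ) : LaurentPolynomial k) • y i := by
  set σ : Module.End k (LaurentPolynomial k ⊗[k] g) := (twistedAction ζ hζ0 u 1).toLinearMap
  have hσ : σ ^ m = 1 :=
    (map_pow LinearEquiv.automorphismGroup.toLinearMapMonoidHom _ m).symm.trans
      (by rw [hu.twistedAction_pow_eq_one hζ.pow_eq_one, map_one])
  have hT : ∀ (n : ℤ) (v : LaurentPolynomial k ⊗[k] g),
      (T n : LaurentPolynomial k) • T (-n) • v = v := fun n v => by
    rw [smul_smul, ← T_add, add_neg_cancel, T_zero, one_smul]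
  refine ⟨fun j => (T (-(j : ℤ)) : LaurentPolynomial k) • σ.eigenProj m ζ j x,
    ⟨fun j => ?_, ?_⟩, ?_⟩
  · rw [← hu.T_smul_mem_eigenspace_iff, hT]
    exact Module.End.mem_eigenspace_eigenProj hσ hζ.pow_eq_one hζ0 _ x
  · simp only [hT]
    rw [Fin.sum_univ_eq_sum_range (fun j => σ.eigenProj m ζ j x), ← LinearMap.sum_apply,
      Module.End.sum_eigenProj hζ hm, Module.End.one_apply]
  · rintro y ⟨hy, rfl⟩
    funext l
    rw [Module.End.eigenProj_sum_of_mem_eigenspace hζ hm _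
      (fun j => (hu.T_smul_mem_eigenspace_iff j (y j)).2 (hy j)), smul_smul, ← T_add,
      neg_add_cancel, T_zero, one_smul]

end IsCocycle

end TwistedAction

/-- For a 1-cocycle `u` on `Γ` in `Aut_S(g(S))`, the fixed point set
`g(S)_u` is an `R`-subalgebra of `g(S)`, every element of `g(S)` is uniquely of the
form `Σ_{i=0}^{m-1} z^i y_i` with `y_i ∈ g(S)_u`, and consequently the `S`-linear map
`S ⊗_R g(S)_u → g(S)`, `s ⊗ y ↦ s·y`, is an isomorphism of Lie algebras over `S`,
i.e. `g(S)_u` is an `S/R` form of `g(R)`. -/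
theorem statement7 {k : Type*} [Field k] [CharZero k] {g : Type*} [LieRing g] [LieAlgebra k g]
    (m : ℕ) (hm : 0 < m) (ζ : k) (hζ : IsPrimitiveRoot ζ m)
    (u : ℤ → ((LaurentPolynomial k ⊗[k] g) ≃ₗ[k] (LaurentPolynomial k ⊗[k] g)))
    (hu : IsCocycle m ζ (hζ.ne_zero hm.ne') u) :
    ((0 : LaurentPolynomial k ⊗[k] g) ∈ cocycleFixed ζ (hζ.ne_zero hm.ne') u ∧
      (∀ x ∈ cocycleFixed ζ (hζ.ne_zero hm.ne') u,
        ∀ y ∈ cocycleFixed ζ (hζ.ne_zero hm.ne') u,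
          x + y ∈ cocycleFixed ζ (hζ.ne_zero hm.ne') u) ∧
      (∀ (c : k), ∀ x ∈ cocycleFixed ζ (hζ.ne_zero hm.ne') u,
        c • x ∈ cocycleFixed ζ (hζ.ne_zero hm.ne') u) ∧
      (∀ r ∈ Rsub k m, ∀ x ∈ cocycleFixed ζ (hζ.ne_zero hm.ne') u,
        r • x ∈ cocycleFixed ζ (hζ.ne_zero hm.ne') u) ∧
      (∀ x ∈ cocycleFixed ζ (hζ.ne_zero hm.ne') u,
        ∀ y ∈ cocycleFixed ζ (hζ.ne_zero hm.ne') u,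
          ⁅x, y⁆ ∈ cocycleFixed ζ (hζ.ne_zero hm.ne') u)) ∧
    (∀ x : LaurentPolynomial k ⊗[k] g,
      ∃! y : Fin m → LaurentPolynomial k ⊗[k] g,
        (∀ i, y i ∈ cocycleFixed ζ (hζ.ne_zero hm.ne') u) ∧
          x = ∑ i : Fin m, ((T (i : ℤ) : LaurentPolynomial k) • y i)) ∧
    (∀ F : Submodule ↥(Rsub k m) (LaurentPolynomial k ⊗[k] g),
      (F : Set (LaurentPolynomial k ⊗[k] g)) = cocycleFixed ζ (hζ.ne_zero hm.ne') u →
        (∀ (s : LaurentPolynomial k) (y : ↥F),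
          LinearMap.liftBaseChange (LaurentPolynomial k) F.subtype (s ⊗ₜ[↥(Rsub k m)] y)
            = s • (y : LaurentPolynomial k ⊗[k] g)) ∧
        Function.Bijective (LinearMap.liftBaseChange (LaurentPolynomial k) F.subtype)) := by
  have hdecomp := hu.existsUnique_sum_T_smul hζ (Nat.cast_ne_zero.2 hm.ne')
  refine ⟨⟨fun i => by rw [map_zero, map_zero],
    fun x hx y hy i => by rw [map_add, map_add, hx i, hy i],
    fun c x hx i => by rw [map_smul, map_smul, hx i],
    fun r hr x hx => hu.smul_mem_cocycleFixed hζ.pow_eq_one hr hx,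
    fun x hx y hy => hu.lie_mem_cocycleFixed hx hy⟩, hdecomp, fun F hF => ⟨fun s y => rfl, ?_⟩⟩
  refine LinearMap.liftBaseChange_subtype_bijective (span_T_eq_top hm) fun x => ?_
  simpa only [← SetLike.mem_coe, hF] using hdecomp x

end LoopPaper
end
end

section
/- Let g₁ and g₂ be nonzero Lie algebras over k, each perfect and central over k, and let σ_i be a k-algebra automorphism of g_i with σ_i^m = id for i = 1, 2. If φ : L(g₁,σ₁) → L(g₂,σ₂) is an isomorphism of Lie algebras over k, then there exists a unique k-algebra automorphism φ̃ of R such that φ(r·x) = φ̃(r)·φ(x) for all x ∈ L(g₁,σ₁) and r ∈ R. -/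
open scoped TensorProduct
open LaurentPolynomial

set_option maxHeartbeats 1000000
set_option synthInstance.maxHeartbeats 400000

noncomputable section

namespace LoopPaper

variable {k : Type*} [Field k] {g : Type*} [LieRing g] [LieAlgebra k g]

set_option linter.unusedSectionVars false
set_option linter.unusedVariables false

section Chunk1
variable {k : Type*} [Field k] {g : Type*} [LieRing g] [LieAlgebra k g]

def Phi (k : Type*) [Field k] (g : Type*) [LieRing g] [LieAlgebra k g] :
    (LaurentPolynomial k ⊗[k] g) ≃ₗ[k] (ℤ →₀ g) :=
  (TensorProduct.congr (AddMonoidAlgebra.coeffLinearEquiv k) (LinearEquiv.refl k g)).trans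
    (TensorProduct.finsuppScalarLeft k g ℤ)

theorem Phi_tmul_apply (s : LaurentPolynomial k) (y : g) (j : ℤ) :
    Phi k g (s ⊗ₜ[k] y) j = s.coeff j • y :=
  TensorProduct.finsuppScalarLeft_apply_tmul_apply (R := k) (N := g) (ι := ℤ) s.coeff y j

theorem T_coeff (i j : ℤ) : (T i : LaurentPolynomial k).coeff j = if i = j then 1 else 0 := T_apply j i

theorem T_mul_coeff (d : ℤ) (s : LaurentPolynomial k) (j : ℤ) :
    (T d * s : LaurentPolynomial k).coeff j = s.coeff (j - d) := by
  have h := AddMonoidAlgebra.coeff_single_mul_apply s 1 d j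
  have hT : (T d : LaurentPolynomial k) = AddMonoidAlgebra.single d 1 := rfl
  rw [hT, h, one_mul, neg_add_eq_sub]

theorem Phi_T_tmul (i j : ℤ) (y : g) :
    Phi k g (T i ⊗ₜ[k] y) j = if i = j then y else 0 := by
  rw [Phi_tmul_apply, T_coeff]
  split <;> simp

theorem Phi_symm_single (i : ℤ) (y : g) :
    (Phi k g).symm (Finsupp.single i y) = T i ⊗ₜ[k] y := by
  show (TensorProduct.congr (AddMonoidAlgebra.coeffLinearEquiv k) (LinearEquiv.refl k g)).symm
    ((TensorProduct.finsuppScalarLeft k g ℤ).symm (Finsupp.single i y)) = _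
  rw [TensorProduct.finsuppScalarLeft_symm_apply_single, TensorProduct.congr_symm_tmul]
  rfl

theorem Phi_sum_support (x : LaurentPolynomial k ⊗[k] g) :
    x = ∑ j ∈ (Phi k g x).support, T j ⊗ₜ[k] (Phi k g x j) := by
  conv_lhs => rw [← (Phi k g).symm_apply_apply x, ← Finsupp.sum_single (Phi k g x),
    Finsupp.sum, map_sum]
  exact Finset.sum_congr rfl fun j _ => Phi_symm_single j _

theorem Phi_smul_T (d : ℤ) (x : LaurentPolynomial k ⊗[k] g) (j : ℤ) :
    Phi k g ((T d : LaurentPolynomial k) • x) j = Phi k g x (j - d) := by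
  induction x using TensorProduct.induction_on with
  | zero => simp
  | tmul s y =>
    rw [TensorProduct.smul_tmul', smul_eq_mul, Phi_tmul_apply, Phi_tmul_apply, T_mul_coeff]
  | add u v hu hv => simp only [smul_add, map_add, Finsupp.add_apply, hu, hv]

theorem Phi_bracket_T (p : ℤ) (a : g) (x : LaurentPolynomial k ⊗[k] g) (j : ℤ) :
    Phi k g ⁅(T p : LaurentPolynomial k) ⊗ₜ[k] a, x⁆ j = ⁅a, Phi k g x (j - p)⁆ := by
  induction x using TensorProduct.induction_on with
  | zero =>
    have h0 : ⁅(T p : LaurentPolynomial k) ⊗ₜ[k] a, (0 : LaurentPolynomial k ⊗[k] g)⁆ = 0 :=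
      lie_zero ((T p : LaurentPolynomial k) ⊗ₜ[k] a : LaurentPolynomial k ⊗[k] g)
    rw [h0, map_zero]
    simp
  | tmul s y =>
    rw [LieAlgebra.ExtendScalars.bracket_tmul, Phi_tmul_apply, Phi_tmul_apply, T_mul_coeff,
      lie_smul]
  | add u v hu hv =>
    have h0 : ⁅(T p : LaurentPolynomial k) ⊗ₜ[k] a, u + v⁆
        = ⁅(T p : LaurentPolynomial k) ⊗ₜ[k] a, u⁆ + ⁅(T p : LaurentPolynomial k) ⊗ₜ[k] a, v⁆ :=
      lie_add ((T p : LaurentPolynomial k) ⊗ₜ[k] a : LaurentPolynomial k ⊗[k] g) u v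
    simp only [h0, map_add, Finsupp.add_apply, hu, hv, lie_add]

theorem tmul_eq_zero_iff {s : LaurentPolynomial k} {y : g} (hy : y ≠ 0) :
    s ⊗ₜ[k] y = 0 ↔ s = 0 := by
  constructor
  · intro h
    ext j
    have := congrArg (fun w => Phi k g w j) h
    simp only [map_zero] at this
    rw [Phi_tmul_apply] at this
    simpa [hy] using this
  · rintro rfl; exact TensorProduct.zero_tmul _ _
variable {k : Type*} [Field k] {g : Type*} [LieRing g] [LieAlgebra k g]

theorem linEquiv_pow_succ (σ : g ≃ₗ[k] g) (b : ℕ) (y : g) :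
    (σ ^ (b + 1)) y = σ ((σ ^ b) y) := by
  rw [pow_succ']
  rfl

theorem eig_pow {σ : g ≃ₗ[k] g} {c : k} {y : g} (h : σ y = c • y) (b : ℕ) :
    (σ ^ b) y = c ^ b • y := by
  induction b with
  | zero => simp
  | succ b ih => rw [linEquiv_pow_succ, ih, map_smul, h, smul_smul, ← pow_succ]

theorem zsum_zeta {m : ℕ} {ζ : k} (hζ : IsPrimitiveRoot ζ m) (n : ℤ) :
    (∑ b ∈ Finset.range m, ζ ^ (n * b)) = if (m : ℤ) ∣ n then (m : k) else 0 := by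
  have hterm : ∀ b : ℕ, ζ ^ (n * b) = (ζ ^ n) ^ b := by
    intro b
    rw [← zpow_natCast (ζ ^ n) b, ← zpow_mul]
  simp only [hterm]
  by_cases hd : (m : ℤ) ∣ n
  · rw [if_pos hd, (hζ.zpow_eq_one_iff_dvd n).mpr hd]
    simp
  · rw [if_neg hd]
    have hw1 : ζ ^ n ≠ 1 := fun h => hd ((hζ.zpow_eq_one_iff_dvd n).mp h)
    have hwm : (ζ ^ n) ^ m = 1 := by
      rw [← zpow_natCast (ζ ^ n) m, ← zpow_mul, mul_comm, zpow_mul, zpow_natCast, hζ.pow_eq_one,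
        one_zpow]
    have hg := geom_sum_mul (ζ ^ n) m
    rw [hwm, sub_self] at hg
    rcases mul_eq_zero.mp hg with h | h
    · exact h
    · exact absurd (sub_eq_zero.mp h) hw1

theorem lie_sum' {ι : Type*} (b : g) (f : ι → g) (s : Finset ι) :
    ⁅b, ∑ i ∈ s, f i⁆ = ∑ i ∈ s, ⁅b, f i⁆ := by
  classical
  induction s using Finset.induction with
  | empty => simp
  | insert _ _ hni ih =>
    rw [Finset.sum_insert hni, Finset.sum_insert hni, lie_add, ih]

theorem sum_lie' {ι : Type*} (b : g) (f : ι → g) (s : Finset ι) :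
    ⁅∑ i ∈ s, f i, b⁆ = ∑ i ∈ s, ⁅f i, b⁆ := by
  classical
  induction s using Finset.induction with
  | empty => simp
  | insert _ _ hni ih =>
    rw [Finset.sum_insert hni, Finset.sum_insert hni, add_lie, ih]

/-- Projector onto the `ζ^i`-eigenspace of `σ`. -/
def pim (m : ℕ) (ζ : k) (σ : g ≃ₗ[k] g) (i : ℤ) : g →ₗ[k] g :=
  (m : k)⁻¹ • ∑ b ∈ Finset.range m, ζ ^ (-(i * b)) • ((σ ^ b : g ≃ₗ[k] g) : g →ₗ[k] g)

theorem pim_apply (m : ℕ) (ζ : k) (σ : g ≃ₗ[k] g) (i : ℤ) (y : g) :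
    pim m ζ σ i y = (m : k)⁻¹ • ∑ b ∈ Finset.range m, ζ ^ (-(i * b)) • (σ ^ b) y := by
  simp [pim, LinearMap.sum_apply]

theorem pim_congr {m : ℕ} {ζ : k} (hm : 0 < m) (hζ : IsPrimitiveRoot ζ m) (σ : g ≃ₗ[k] g)
    {i i' : ℤ} (h : (m : ℤ) ∣ (i - i')) : pim m ζ σ i = pim m ζ σ i' := by
  have hne : ζ ≠ 0 := hζ.ne_zero hm.ne'
  unfold pim
  congr 1
  refine Finset.sum_congr rfl fun b _ => ?_
  congr 1
  have h1 : (-(i * b)) = (-(i' * b)) + ((i' - i) * b) := by ring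
  have h2 : (m : ℤ) ∣ (i' - i) * b := by
    refine Dvd.dvd.mul_right ?_ _
    rw [← neg_sub]
    exact dvd_neg.mpr h
  rw [h1, zpow_add₀ hne, (hζ.zpow_eq_one_iff_dvd _).mpr h2, mul_one]

theorem pim_eig {m : ℕ} {ζ : k} (hm : 0 < m) (hζ : IsPrimitiveRoot ζ m) [CharZero k]
    (σ : g ≃ₗ[k] g) {j : ℤ} {y : g} (hy : σ y = ζ ^ j • y) (i : ℤ) :
    pim m ζ σ i y = if (m : ℤ) ∣ (j - i) then y else 0 := by
  have hne : ζ ≠ 0 := hζ.ne_zero hm.ne'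
  have hterm : ∀ b ∈ Finset.range m, ζ ^ (-(i * b)) • (σ ^ b) y = ζ ^ ((j - i) * b) • y := by
    intro b _
    rw [eig_pow hy b, smul_smul]
    congr 1
    rw [← zpow_natCast (ζ ^ j) b, ← zpow_mul, ← zpow_add₀ hne]
    congr 1
    ring
  rw [pim_apply, Finset.sum_congr rfl hterm, ← Finset.sum_smul, zsum_zeta hζ (j - i)]
  have hmk : (m : k) ≠ 0 := Nat.cast_ne_zero.mpr hm.ne'
  split
  · rw [smul_smul, inv_mul_cancel₀ hmk, one_smul]
  · rw [zero_smul, smul_zero]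

theorem pim_mem_eig {m : ℕ} {ζ : k} (hm : 0 < m) (hζ : IsPrimitiveRoot ζ m)
    {σ : g ≃ₗ[k] g} (hσ : σ ^ m = 1) (i : ℤ) (y : g) :
    σ (pim m ζ σ i y) = ζ ^ i • pim m ζ σ i y := by
  have hne : ζ ≠ 0 := hζ.ne_zero hm.ne'
  set f : ℕ → g := fun b => ζ ^ (-(i * b)) • (σ ^ b) y with hf
  have hfm : f m = f 0 := by
    simp only [hf]
    rw [hσ]
    have h1 : ζ ^ (-(i * (m : ℕ))) = 1 := by
      refine (hζ.zpow_eq_one_iff_dvd _).mpr ?_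
      exact ⟨-i, by ring⟩
    have h0 : ζ ^ (-(i * (0 : ℕ))) = 1 := by norm_num
    rw [h1, h0]
    rfl
  have key : σ (∑ b ∈ Finset.range m, f b) = ζ ^ i • ∑ b ∈ Finset.range m, f b := by
    rw [map_sum]
    have hterm : ∀ b ∈ Finset.range m, σ (f b) = ζ ^ i • f (b + 1) := by
      intro b _
      simp only [hf]
      rw [map_smul, ← linEquiv_pow_succ, smul_smul]
      congr 1
      rw [← zpow_add₀ hne]
      congr 1
      push_cast
      ring
    rw [Finset.sum_congr rfl hterm, ← Finset.smul_sum]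
    congr 1
    have h1 : ∑ b ∈ Finset.range (m + 1), f b = (∑ b ∈ Finset.range m, f (b + 1)) + f 0 :=
      Finset.sum_range_succ' f m
    have h2 : ∑ b ∈ Finset.range (m + 1), f b = (∑ b ∈ Finset.range m, f b) + f m :=
      Finset.sum_range_succ f m
    have := h1.symm.trans h2
    rw [hfm] at this
    exact add_right_cancel this
  rw [pim_apply, map_smul, key, smul_comm]

theorem pim_sum {m : ℕ} {ζ : k} (hm : 0 < m) (hζ : IsPrimitiveRoot ζ m) [CharZero k]
    {σ : g ≃ₗ[k] g} (hσ : σ ^ m = 1) (y : g) :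
    ∑ i ∈ Finset.range m, pim m ζ σ (i : ℤ) y = y := by
  have hmk : (m : k) ≠ 0 := Nat.cast_ne_zero.mpr hm.ne'
  have h1 : ∀ i ∈ Finset.range m, pim m ζ σ (i : ℤ) y
      = (m : k)⁻¹ • ∑ b ∈ Finset.range m, ζ ^ ((-(b : ℤ)) * i) • (σ ^ b) y := by
    intro i _
    rw [pim_apply]
    congr 1
    refine Finset.sum_congr rfl fun b _ => ?_
    congr 2
    ring
  rw [Finset.sum_congr rfl h1, ← Finset.smul_sum, Finset.sum_comm]
  have h2 : ∀ b ∈ Finset.range m, ∑ i ∈ Finset.range m, ζ ^ ((-(b : ℤ)) * i) • (σ ^ b) y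
      = (if b = 0 then (m : k) else 0) • (σ ^ b) y := by
    intro b hb
    rw [← Finset.sum_smul, zsum_zeta hζ (-(b : ℤ))]
    congr 1
    have : ((m : ℤ) ∣ -(b : ℤ)) ↔ b = 0 := by
      rw [dvd_neg, Int.natCast_dvd_natCast]
      constructor
      · intro h
        exact Nat.eq_zero_of_dvd_of_lt h (Finset.mem_range.mp hb)
      · rintro rfl; exact dvd_zero m
    simp [this]
  rw [Finset.sum_congr rfl h2]
  rw [Finset.sum_eq_single 0]
  · simp [hmk]
  · intro b _ hb; simp [hb]
  · intro h; exact absurd (Finset.mem_range.mpr hm) h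

theorem pim_bracket {m : ℕ} {ζ : k} (hm : 0 < m) (hζ : IsPrimitiveRoot ζ m)
    {σ : g ≃ₗ[k] g} (hbr : ∀ x y : g, σ ⁅x, y⁆ = ⁅σ x, σ y⁆) {p : ℤ} {b : g}
    (hb : σ b = ζ ^ p • b) (i : ℤ) (x : g) :
    pim m ζ σ i ⁅b, x⁆ = ⁅b, pim m ζ σ (i - p) x⁆ := by
  have hne : ζ ≠ 0 := hζ.ne_zero hm.ne'
  have hbrn : ∀ n : ℕ, ∀ u v : g, (σ ^ n) ⁅u, v⁆ = ⁅(σ ^ n) u, (σ ^ n) v⁆ := by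
    intro n
    induction n with
    | zero => intro u v; rfl
    | succ n ih =>
      intro u v
      rw [linEquiv_pow_succ, linEquiv_pow_succ, linEquiv_pow_succ, ih, hbr]
  rw [pim_apply, pim_apply, lie_smul]
  congr 1
  rw [lie_sum']
  refine Finset.sum_congr rfl fun n _ => ?_
  rw [hbrn n b x, eig_pow hb n, smul_lie, smul_smul, lie_smul]
  congr 1
  rw [← zpow_natCast (ζ ^ p) n, ← zpow_mul, ← zpow_add₀ hne]
  congr 1
  ring
end Chunk1

section Chunk3


variable {k : Type*} [Field k] {g : Type*} [LieRing g] [LieAlgebra k g]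

theorem T_mem_Rsub {m : ℕ} {d : ℤ} (h : (m : ℤ) ∣ d) : (T d : LaurentPolynomial k) ∈ Rsub k m := by
  obtain ⟨q, rfl⟩ := h
  rcases le_or_gt 0 q with hq | hq
  · have : (T ((m : ℤ) * q) : LaurentPolynomial k) = (T (m : ℤ)) ^ q.toNat := by
      rw [T_pow]
      congr 1
      rw [mul_comm]
      congr 1
      exact (Int.toNat_of_nonneg hq).symm
    rw [this]
    exact pow_mem (Algebra.subset_adjoin (Set.mem_insert _ _)) _
  · have : (T ((m : ℤ) * q) : LaurentPolynomial k) = (T (-(m : ℤ))) ^ (-q).toNat := by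
      rw [T_pow]
      congr 1
      rw [Int.toNat_of_nonneg (by omega : (0:ℤ) ≤ -q)]
      ring
    rw [this]
    refine pow_mem (Algebra.subset_adjoin ?_) _
    exact Set.mem_insert_of_mem _ rfl

variable {m : ℕ} {ζ : k}

theorem gen_mem (σ : g ≃ₗ[k] g) (i : ℤ) {y : g} (hy : σ y = ζ ^ i • y) :
    T i ⊗ₜ[k] y ∈ loopCarrier ζ σ :=
  Submodule.subset_span ⟨i, y, hy, rfl⟩

theorem coeff_eig {σ : g ≃ₗ[k] g} {x : LaurentPolynomial k ⊗[k] g}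
    (hx : x ∈ loopCarrier ζ σ) (j : ℤ) : σ (Phi k g x j) = ζ ^ j • Phi k g x j := by
  induction hx using Submodule.span_induction with
  | mem p hp =>
    obtain ⟨i, y, hy, rfl⟩ := hp
    rw [Phi_T_tmul]
    split
    · subst ‹i = j›; exact hy
    · simp
  | zero => simp
  | add u v _ _ hu hv => simp only [map_add, Finsupp.add_apply, hu, hv, smul_add]
  | smul c u _ hu =>
    rw [map_smul, Finsupp.smul_apply, map_smul, hu, smul_comm]

theorem mem_of_coeffs {σ : g ≃ₗ[k] g} {x : LaurentPolynomial k ⊗[k] g}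
    (h : ∀ j : ℤ, σ (Phi k g x j) = ζ ^ j • Phi k g x j) : x ∈ loopCarrier ζ σ := by
  rw [Phi_sum_support x]
  exact Submodule.sum_mem _ fun j _ => gen_mem σ j (h j)

section Main

variable [CharZero k] (hm : 0 < m) (hζ : IsPrimitiveRoot ζ m)
variable (σ : g ≃ₗ[k] g) (hbr : IsLieAut σ) (hσ : σ ^ m = 1)

local notation "LL" => loopAlgebra m ζ (hζ.ne_zero hm.ne') hζ.pow_eq_one σ hbr hσ

theorem gen_memL (i : ℤ) {y : g} (hy : σ y = ζ ^ i • y) : T i ⊗ₜ[k] y ∈ LL :=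
  gen_mem σ i hy

/-- The element `T i ⊗ y` of the loop algebra. -/
def genE (i : ℤ) {y : g} (hy : σ y = ζ ^ i • y) : ↥LL :=
  ⟨T i ⊗ₜ[k] y, gen_memL hm hζ σ hbr hσ i hy⟩

/-- `x ↦ T i ⊗ π_i x` as a linear map from `g` to the loop algebra. -/
def genLM (i : ℤ) : g →ₗ[k] ↥LL where
  toFun x := ⟨T i ⊗ₜ[k] pim m ζ σ i x,
    gen_memL hm hζ σ hbr hσ i (pim_mem_eig hm hζ hσ i x)⟩
  map_add' x y := Subtype.ext (by
    show T i ⊗ₜ[k] pim m ζ σ i (x + y) = T i ⊗ₜ[k] pim m ζ σ i x + T i ⊗ₜ[k] pim m ζ σ i y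
    rw [map_add, TensorProduct.tmul_add])
  map_smul' c x := Subtype.ext (by
    show T i ⊗ₜ[k] pim m ζ σ i (c • x) = c • (T i ⊗ₜ[k] pim m ζ σ i x)
    rw [map_smul, TensorProduct.tmul_smul])

theorem genLM_coe (i : ℤ) (x : g) :
    (genLM hm hζ σ hbr hσ i x : LaurentPolynomial k ⊗[k] g) = T i ⊗ₜ[k] pim m ζ σ i x := rfl

theorem eig_bracket {σ : g ≃ₗ[k] g} (hbr : IsLieAut σ) {p i : ℤ} {b y : g}
    (hb : σ b = ζ ^ p • b) (hy : σ y = ζ ^ i • y) (hζ0 : ζ ≠ 0) :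
    σ ⁅b, y⁆ = ζ ^ (p + i) • ⁅b, y⁆ := by
  rw [hbr, hb, hy, smul_lie, lie_smul, smul_smul, ← zpow_add₀ hζ0]

theorem genE_bracket {p i : ℤ} {b y : g} (hb : σ b = ζ ^ p • b) (hy : σ y = ζ ^ i • y) :
    ⁅genE hm hζ σ hbr hσ p hb, genE hm hζ σ hbr hσ i hy⁆
      = genE hm hζ σ hbr hσ (p + i) (eig_bracket hbr hb hy (hζ.ne_zero hm.ne')) := by
  apply Subtype.ext
  show ⁅(T p ⊗ₜ[k] b : LaurentPolynomial k ⊗[k] g), T i ⊗ₜ[k] y⁆ = T (p + i) ⊗ₜ[k] ⁅b, y⁆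
  rw [LieAlgebra.ExtendScalars.bracket_tmul, ← T_add]

/-- The loop algebra is perfect (over `ℤ`). -/
theorem loop_perfect
    (hperf : Submodule.span ℤ {w : g | ∃ x y : g, ⁅x, y⁆ = w} = ⊤) (x : ↥LL) :
    x ∈ Submodule.span ℤ {w : ↥LL | ∃ u v : ↥LL, ⁅u, v⁆ = w} := by
  set P := Submodule.span ℤ {w : ↥LL | ∃ u v : ↥LL, ⁅u, v⁆ = w} with hP
  have hsmul : ∀ (c : k), ∀ w ∈ P, c • w ∈ P := by
    intro c w hw
    induction hw using Submodule.span_induction with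
    | mem p hp =>
      obtain ⟨u, v, rfl⟩ := hp
      rw [← smul_lie]
      exact Submodule.subset_span ⟨c • u, v, rfl⟩
    | zero => rw [smul_zero]; exact zero_mem _
    | add u v _ _ hu hv => rw [smul_add]; exact add_mem hu hv
    | smul n u _ hu => rw [smul_comm]; exact Submodule.smul_mem _ _ hu
  -- step: every genLM value is in P
  have hgen : ∀ (i : ℤ) (y : g), genLM hm hζ σ hbr hσ i y ∈ P := by
    intro i y
    have hy : y ∈ (⊤ : Submodule ℤ g) := trivial
    rw [← hperf] at hy
    induction hy using Submodule.span_induction with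
    | mem w hw =>
      obtain ⟨a, b, rfl⟩ := hw
      -- π_i ⁅a, b⁆ = ∑_{q<m} ⁅π_q a, π_{i-q} b⁆
      have hpi : pim m ζ σ i ⁅a, b⁆
          = ∑ q ∈ Finset.range m, ⁅pim m ζ σ (q : ℤ) a, pim m ζ σ (i - q) b⁆ := by
        conv_lhs => rw [show a = ∑ q ∈ Finset.range m, pim m ζ σ (q : ℤ) a from
          (pim_sum hm hζ hσ a).symm]
        rw [sum_lie', map_sum]
        refine Finset.sum_congr rfl fun q _ => ?_
        exact pim_bracket hm hζ hbr (pim_mem_eig hm hζ hσ (q : ℤ) a) i b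
      have : genLM hm hζ σ hbr hσ i ⁅a, b⁆
          = ∑ q ∈ Finset.range m, ⁅genE hm hζ σ hbr hσ (q : ℤ) (pim_mem_eig hm hζ hσ (q : ℤ) a),
              genE hm hζ σ hbr hσ (i - q) (pim_mem_eig hm hζ hσ (i - q) b)⁆ := by
        apply Subtype.ext
        rw [genLM_coe, hpi]
        have hco : ((∑ q ∈ Finset.range m,
            ⁅genE hm hζ σ hbr hσ (q : ℤ) (pim_mem_eig hm hζ hσ (q : ℤ) a),
              genE hm hζ σ hbr hσ (i - q) (pim_mem_eig hm hζ hσ (i - q) b)⁆ : ↥LL) :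
            LaurentPolynomial k ⊗[k] g)
            = ∑ q ∈ Finset.range m, ((⁅genE hm hζ σ hbr hσ (q : ℤ) (pim_mem_eig hm hζ hσ (q : ℤ) a),
              genE hm hζ σ hbr hσ (i - q) (pim_mem_eig hm hζ hσ (i - q) b)⁆ : ↥LL) :
              LaurentPolynomial k ⊗[k] g) := by
          exact AddSubmonoidClass.coe_finset_sum _ _
        rw [hco, TensorProduct.tmul_sum]
        refine Finset.sum_congr rfl fun q _ => ?_
        rw [genE_bracket]
        show T i ⊗ₜ[k] ⁅pim m ζ σ (q:ℤ) a, pim m ζ σ (i - q) b⁆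
          = T ((q : ℤ) + (i - q)) ⊗ₜ[k] ⁅pim m ζ σ (q:ℤ) a, pim m ζ σ (i - q) b⁆
        congr 1
        ring_nf
      rw [this]
      exact Submodule.sum_mem _ fun q _ => Submodule.subset_span ⟨_, _, rfl⟩
    | zero => rw [map_zero]; exact zero_mem _
    | add u v _ _ hu hv => rw [map_add]; exact add_mem hu hv
    | smul n u _ hu =>
      have : genLM hm hζ σ hbr hσ i ((n : ℤ) • u) = (n : ℤ) • genLM hm hζ σ hbr hσ i u :=
        map_zsmul _ _ _
      rw [this]
      exact Submodule.smul_mem _ _ hu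
  have key : ∀ w (hw : w ∈ loopCarrier ζ σ) (h2 : w ∈ LL), (⟨w, h2⟩ : ↥LL) ∈ P := by
    intro w hw
    induction hw using Submodule.span_induction with
    | mem w' hw' =>
      intro h2
      obtain ⟨i, y, hy, rfl⟩ := hw'
      have : (⟨T i ⊗ₜ[k] y, h2⟩ : ↥LL) = genLM hm hζ σ hbr hσ i y := by
        apply Subtype.ext
        rw [genLM_coe]
        congr 1
        rw [pim_eig hm hζ σ hy i]
        simp
      rw [this]
      exact hgen i y
    | zero =>
      intro h2
      have : (⟨0, h2⟩ : ↥LL) = 0 := rfl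
      rw [this]; exact zero_mem _
    | add u v hu hv ihu ihv =>
      intro h2
      have : (⟨u + v, h2⟩ : ↥LL)
          = ⟨u, mem_loopAlgebra_iff.mpr hu⟩ + ⟨v, mem_loopAlgebra_iff.mpr hv⟩ := rfl
      rw [this]
      exact add_mem (ihu _) (ihv _)
    | smul c u hu ihu =>
      intro h2
      have : (⟨c • u, h2⟩ : ↥LL) = c • (⟨u, mem_loopAlgebra_iff.mpr hu⟩ : ↥LL) := rfl
      rw [this]
      exact hsmul c _ (ihu _)
  obtain ⟨w, hw⟩ := x
  exact key w (mem_loopAlgebra_iff.mp hw) hw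

end Main


variable {k : Type*} [Field k] {g : Type*} [LieRing g] [LieAlgebra k g]
variable {m : ℕ} {ζ : k}

section Main2

variable [CharZero k] (hm : 0 < m) (hζ : IsPrimitiveRoot ζ m)
variable (σ : g ≃ₗ[k] g) (hbr : IsLieAut σ) (hσ : σ ^ m = 1)

local notation "LL" => loopAlgebra m ζ (hζ.ne_zero hm.ne') hζ.pow_eq_one σ hbr hσ

theorem smul_bracket_left (r : ↥(Rsub k m)) (u v : ↥LL) :
    r • ⁅u, v⁆ = ⁅r • u, v⁆ := by
  apply Subtype.ext
  rw [loop_smul_coe]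
  show (r : LaurentPolynomial k) • (⁅(u : LaurentPolynomial k ⊗[k] g), (v : LaurentPolynomial k ⊗[k] g)⁆)
    = ⁅(r : LaurentPolynomial k) • (u : LaurentPolynomial k ⊗[k] g), (v : LaurentPolynomial k ⊗[k] g)⁆
  exact (smul_lie (r : LaurentPolynomial k) (u : LaurentPolynomial k ⊗[k] g)
    (v : LaurentPolynomial k ⊗[k] g)).symm

theorem centroid_smul
    (hperf : Submodule.span ℤ {w : g | ∃ x y : g, ⁅x, y⁆ = w} = ⊤)
    (χ : ↥LL →ₗ[k] ↥LL) (hχ : ∀ x y : ↥LL, χ ⁅x, y⁆ = ⁅x, χ y⁆)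
    (r : ↥(Rsub k m)) (x : ↥LL) : χ (r • x) = r • χ x := by
  have hx := loop_perfect hm hζ σ hbr hσ hperf x
  induction hx using Submodule.span_induction with
  | mem w hw =>
    obtain ⟨u, v, rfl⟩ := hw
    rw [smul_bracket_left hm hζ σ hbr hσ r u v, hχ, hχ, ← smul_bracket_left hm hζ σ hbr hσ r u (χ v)]
  | zero => rw [smul_zero, map_zero, smul_zero]
  | add u v _ _ hu hv => rw [smul_add, map_add, hu, hv, map_add, smul_add]
  | smul n u _ hu => rw [smul_comm, map_zsmul, map_zsmul, hu, smul_comm]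

/-- The `(i+n)`-th coefficient of `χ(T i ⊗ π_i x)`. -/
def cfun (χ : ↥LL →ₗ[k] ↥LL) (i n : ℤ) (x : g) : g :=
  Phi k g (↑(χ (genLM hm hζ σ hbr hσ i x))) (i + n)

/-- `T m` as an element of `R`. -/
def tmR : ↥(Rsub k m) := ⟨T (m : ℤ), T_mem_Rsub dvd_rfl⟩

theorem genLM_shift (i : ℤ) (x : g) :
    genLM hm hζ σ hbr hσ (i + m) x = (tmR : ↥(Rsub k m)) • genLM hm hζ σ hbr hσ i x := by
  apply Subtype.ext
  rw [loop_smul_coe, genLM_coe, genLM_coe]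
  rw [pim_congr hm hζ σ (by simp : (m:ℤ) ∣ (i + m - i))]
  show T (i + m) ⊗ₜ[k] pim m ζ σ i x
      = (T (m:ℤ) : LaurentPolynomial k) • (T i ⊗ₜ[k] pim m ζ σ i x)
  rw [TensorProduct.smul_tmul', smul_eq_mul, ← T_add]
  congr 2
  ring

theorem cfun_shift (χ : ↥LL →ₗ[k] ↥LL)
    (hRlin : ∀ (r : ↥(Rsub k m)) (x : ↥LL), χ (r • x) = r • χ x) (i n : ℤ) (x : g) :
    cfun hm hζ σ hbr hσ χ (i + m) n x = cfun hm hζ σ hbr hσ χ i n x := by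
  unfold cfun
  rw [genLM_shift, hRlin, loop_smul_coe]
  have : ((tmR : ↥(Rsub k m)) : LaurentPolynomial k) = T (m : ℤ) := rfl
  rw [this, Phi_smul_T]
  congr 1
  ring

theorem cfun_congr (χ : ↥LL →ₗ[k] ↥LL)
    (hRlin : ∀ (r : ↥(Rsub k m)) (x : ↥LL), χ (r • x) = r • χ x) {i i' : ℤ}
    (h : (m : ℤ) ∣ i - i') (n : ℤ) (x : g) :
    cfun hm hζ σ hbr hσ χ i n x = cfun hm hζ σ hbr hσ χ i' n x := by
  obtain ⟨t, ht⟩ := h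
  have key : ∀ t : ℤ, cfun hm hζ σ hbr hσ χ (i' + m * t) n x = cfun hm hζ σ hbr hσ χ i' n x := by
    intro t
    induction t using Int.induction_on with
    | zero => norm_num
    | succ t ih =>
      have harg : i' + m * ((t : ℤ) + 1) = (i' + m * t) + m := by ring
      rw [harg, cfun_shift hm hζ σ hbr hσ χ hRlin, ih]
    | pred t ih =>
      have harg : i' + m * (-(t : ℤ) - 1) + m = i' + m * (-(t:ℤ)) := by ring
      have := cfun_shift hm hζ σ hbr hσ χ hRlin (i' + m * (-(t : ℤ) - 1)) n x
      rw [harg] at this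
      rw [← this]
      exact ih
  have hi : i = i' + m * t := by omega
  rw [hi, key]

theorem cfun_add (χ : ↥LL →ₗ[k] ↥LL) (i n : ℤ) (x y : g) :
    cfun hm hζ σ hbr hσ χ i n (x + y)
      = cfun hm hζ σ hbr hσ χ i n x + cfun hm hζ σ hbr hσ χ i n y := by
  unfold cfun
  rw [(genLM hm hζ σ hbr hσ i).map_add, χ.map_add]
  have h1 : ((χ (genLM hm hζ σ hbr hσ i x) + χ (genLM hm hζ σ hbr hσ i y) : ↥LL) :
      LaurentPolynomial k ⊗[k] g)
      = ↑(χ (genLM hm hζ σ hbr hσ i x)) + ↑(χ (genLM hm hζ σ hbr hσ i y)) := rfl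
  rw [h1, (Phi k g).map_add, Finsupp.add_apply]

theorem cfun_smul (χ : ↥LL →ₗ[k] ↥LL) (i n : ℤ) (c : k) (x : g) :
    cfun hm hζ σ hbr hσ χ i n (c • x) = c • cfun hm hζ σ hbr hσ χ i n x := by
  unfold cfun
  rw [(genLM hm hζ σ hbr hσ i).map_smul, χ.map_smul]
  have h1 : ((c • χ (genLM hm hζ σ hbr hσ i x) : ↥LL) : LaurentPolynomial k ⊗[k] g)
      = c • ↑(χ (genLM hm hζ σ hbr hσ i x)) := rfl
  rw [h1, (Phi k g).map_smul, Finsupp.smul_apply]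

/-- The degree-`n` component of the centroid element `χ`, as a map `g → g`. -/
def EchiL (χ : ↥LL →ₗ[k] ↥LL) (n : ℤ) : g →ₗ[k] g :=
  haveI : NeZero m := ⟨hm.ne'⟩
  { toFun := fun x => ∑ a : ZMod m, cfun hm hζ σ hbr hσ χ ((a.val : ℤ)) n x
    map_add' := by
      intro x y
      rw [← Finset.sum_add_distrib]
      exact Finset.sum_congr rfl fun a _ => cfun_add hm hζ σ hbr hσ χ _ n x y
    map_smul' := by
      intro c x
      rw [RingHom.id_apply, Finset.smul_sum]
      exact Finset.sum_congr rfl fun a _ => cfun_smul hm hζ σ hbr hσ χ _ n c x }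

theorem EchiL_apply (χ : ↥LL →ₗ[k] ↥LL) (n : ℤ) (x : g) :
    haveI : NeZero m := ⟨hm.ne'⟩
    EchiL hm hζ σ hbr hσ χ n x = ∑ a : ZMod m, cfun hm hζ σ hbr hσ χ ((a.val : ℤ)) n x := rfl

theorem zmod_dvd {i j : ℤ} (h : (i : ZMod m) = (j : ZMod m)) : (m : ℤ) ∣ i - j := by
  have h2 := (ZMod.intCast_eq_intCast_iff i j m).mp h
  exact Int.ModEq.dvd h2.symm

theorem zmod_dvd_sub_val (i : ℤ) [NeZero m] : (m : ℤ) ∣ i - (((i : ZMod m)).val : ℤ) := by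
  refine zmod_dvd ?_
  rw [Int.cast_natCast, ZMod.natCast_val, ZMod.cast_id]

theorem genLM_bracket_eig {p : ℤ} {b : g} (hb : σ b = ζ ^ p • b) (i : ℤ) (x : g) :
    genLM hm hζ σ hbr hσ i ⁅b, x⁆
      = ⁅genE hm hζ σ hbr hσ p hb, genLM hm hζ σ hbr hσ (i - p) x⁆ := by
  apply Subtype.ext
  rw [genLM_coe]
  show T i ⊗ₜ[k] pim m ζ σ i ⁅b, x⁆
      = ⁅(T p ⊗ₜ[k] b : LaurentPolynomial k ⊗[k] g), T (i - p) ⊗ₜ[k] pim m ζ σ (i - p) x⁆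
  rw [LieAlgebra.ExtendScalars.bracket_tmul, ← T_add, pim_bracket hm hζ hbr hb i x]
  congr 2
  ring

theorem cfun_bracket_eig (χ : ↥LL →ₗ[k] ↥LL) (hχ : ∀ x y : ↥LL, χ ⁅x, y⁆ = ⁅x, χ y⁆)
    {p : ℤ} {b : g} (hb : σ b = ζ ^ p • b) (i n : ℤ) (x : g) :
    cfun hm hζ σ hbr hσ χ i n ⁅b, x⁆ = ⁅b, cfun hm hζ σ hbr hσ χ (i - p) n x⁆ := by
  unfold cfun
  rw [genLM_bracket_eig hm hζ σ hbr hσ hb i x, hχ]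
  have hco : ((⁅genE hm hζ σ hbr hσ p hb, χ (genLM hm hζ σ hbr hσ (i - p) x)⁆ : ↥LL) :
      LaurentPolynomial k ⊗[k] g)
      = ⁅(T p ⊗ₜ[k] b : LaurentPolynomial k ⊗[k] g),
          (↑(χ (genLM hm hζ σ hbr hσ (i - p) x)) : LaurentPolynomial k ⊗[k] g)⁆ := rfl
  rw [hco, Phi_bracket_T]
  congr 2
  ring

theorem EchiL_comm_eig (χ : ↥LL →ₗ[k] ↥LL) (hχ : ∀ x y : ↥LL, χ ⁅x, y⁆ = ⁅x, χ y⁆)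
    (hRlin : ∀ (r : ↥(Rsub k m)) (x : ↥LL), χ (r • x) = r • χ x)
    {p : ℤ} {b : g} (hb : σ b = ζ ^ p • b) (n : ℤ) (x : g) :
    EchiL hm hζ σ hbr hσ χ n ⁅b, x⁆ = ⁅b, EchiL hm hζ σ hbr hσ χ n x⁆ := by
  haveI : NeZero m := ⟨hm.ne'⟩
  rw [EchiL_apply, EchiL_apply, lie_sum']
  have h1 : ∀ a : ZMod m, cfun hm hζ σ hbr hσ χ ((a.val : ℤ)) n ⁅b, x⁆
      = ⁅b, cfun hm hζ σ hbr hσ χ (((a - (p : ZMod m)).val : ℤ)) n x⁆ := by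
    intro a
    rw [cfun_bracket_eig hm hζ σ hbr hσ χ hχ hb]
    congr 1
    refine cfun_congr hm hζ σ hbr hσ χ hRlin ?_ n x
    refine zmod_dvd ?_
    push_cast
    rw [ZMod.natCast_val, ZMod.cast_id, ZMod.natCast_val, ZMod.cast_id]
  rw [Finset.sum_congr rfl fun a _ => h1 a]
  refine Fintype.sum_equiv (Equiv.subRight (p : ZMod m)) _ _ fun a => ?_
  rfl

theorem EchiL_comm (χ : ↥LL →ₗ[k] ↥LL) (hχ : ∀ x y : ↥LL, χ ⁅x, y⁆ = ⁅x, χ y⁆)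
    (hRlin : ∀ (r : ↥(Rsub k m)) (x : ↥LL), χ (r • x) = r • χ x)
    (n : ℤ) (b x : g) :
    EchiL hm hζ σ hbr hσ χ n ⁅b, x⁆ = ⁅b, EchiL hm hζ σ hbr hσ χ n x⁆ := by
  conv_lhs => rw [show b = ∑ q ∈ Finset.range m, pim m ζ σ (q : ℤ) b from (pim_sum hm hζ hσ b).symm]
  conv_rhs => rw [show b = ∑ q ∈ Finset.range m, pim m ζ σ (q : ℤ) b from (pim_sum hm hζ hσ b).symm]
  rw [sum_lie', map_sum, sum_lie']
  refine Finset.sum_congr rfl fun q _ => ?_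
  exact EchiL_comm_eig hm hζ σ hbr hσ χ hχ hRlin (pim_mem_eig hm hζ hσ (q : ℤ) b) n x

theorem cfun_eig (χ : ↥LL →ₗ[k] ↥LL)
    (hRlin : ∀ (r : ↥(Rsub k m)) (x : ↥LL), χ (r • x) = r • χ x)
    {i : ℤ} {y : g} (hy : σ y = ζ ^ i • y) (n : ℤ) :
    EchiL hm hζ σ hbr hσ χ n y = cfun hm hζ σ hbr hσ χ i n y := by
  haveI : NeZero m := ⟨hm.ne'⟩
  rw [EchiL_apply]
  rw [Finset.sum_eq_single (i : ZMod m)]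
  · refine (cfun_congr hm hζ σ hbr hσ χ hRlin ?_ n y).symm
    exact zmod_dvd_sub_val i
  · intro a _ ha
    -- π_{a.val} y = 0
    have hpi : pim m ζ σ ((a.val : ℤ)) y = 0 := by
      rw [pim_eig hm hζ σ hy]
      rw [if_neg]
      intro hdvd
      apply ha
      have h2 : (i : ZMod m) = (((a.val : ℤ) : ZMod m)) := by
        have := (ZMod.intCast_eq_intCast_iff i (a.val : ℤ) m).mpr (Int.ModEq.symm
          (Int.modEq_iff_dvd.mpr (by simpa using hdvd)))
        exact this
      rw [h2]
      push_cast
      rw [ZMod.natCast_val, ZMod.cast_id]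
    unfold cfun
    have hz : genLM hm hζ σ hbr hσ ((a.val : ℤ)) y = 0 := by
      apply Subtype.ext
      rw [genLM_coe, hpi]
      exact TensorProduct.tmul_zero _ _
    rw [hz, map_zero]
    have : ((0 : ↥LL) : LaurentPolynomial k ⊗[k] g) = 0 := rfl
    rw [this, map_zero]
    rfl
  · intro h
    exact absurd (Finset.mem_univ _) h

theorem centroid_main [Nontrivial g]
    (hperf : Submodule.span ℤ {w : g | ∃ x y : g, ⁅x, y⁆ = w} = ⊤)
    (hcentral : ∀ χ : g →ₗ[k] g, (∀ x y : g, χ ⁅x, y⁆ = ⁅x, χ y⁆) → ∃ a : k, ∀ x : g, χ x = a • x)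
    (χ : ↥LL →ₗ[k] ↥LL) (hχ : ∀ x y : ↥LL, χ ⁅x, y⁆ = ⁅x, χ y⁆) :
    ∃! p : ↥(Rsub k m), ∀ x : ↥LL,
      ((χ x : ↥LL) : LaurentPolynomial k ⊗[k] g)
        = (p : LaurentPolynomial k) • (x : LaurentPolynomial k ⊗[k] g) := by
  haveI : NeZero m := ⟨hm.ne'⟩
  have hRlin := centroid_smul hm hζ σ hbr hσ hperf χ hχ
  -- scalars e n
  have hEcomm := fun n => EchiL_comm hm hζ σ hbr hσ χ hχ hRlin n
  set e : ℤ → k := fun n => Classical.choose (hcentral (EchiL hm hζ σ hbr hσ χ n)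
    (fun b x => hEcomm n b x)) with he_def
  have he : ∀ n (x : g), EchiL hm hζ σ hbr hσ χ n x = e n • x := fun n =>
    Classical.choose_spec (hcentral (EchiL hm hζ σ hbr hσ χ n) (fun b x => hEcomm n b x))
  -- the key coefficient formula
  have hcoeff : ∀ {i : ℤ} {y : g} (hy : σ y = ζ ^ i • y) (j : ℤ),
      Phi k g (↑(χ (genE hm hζ σ hbr hσ i hy))) j = e (j - i) • y := by
    intro i y hy j
    have h1 : genE hm hζ σ hbr hσ i hy = genLM hm hζ σ hbr hσ i y := by
      apply Subtype.ext
      rw [genLM_coe, pim_eig hm hζ σ hy i, if_pos (by simp)]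
      rfl
    have h2 := (cfun_eig hm hζ σ hbr hσ χ hRlin hy (j - i)).symm.trans (he (j - i) y)
    unfold cfun at h2
    rw [h1]
    have harg : i + (j - i) = j := by ring
    rw [harg] at h2
    exact h2
  -- choose a nonzero eigenvector
  obtain ⟨y', hy'⟩ := exists_ne (0 : g)
  have hex : ∃ q ∈ Finset.range m, pim m ζ σ (q : ℤ) y' ≠ 0 := by
    by_contra hc
    push_neg at hc
    apply hy'
    rw [← pim_sum hm hζ hσ y']
    exact Finset.sum_eq_zero hc
  obtain ⟨q, _, hy0ne⟩ := hex
  set i0 : ℤ := (q : ℤ)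
  set y0 : g := pim m ζ σ i0 y' with hy0_def
  have hy0 : σ y0 = ζ ^ i0 • y0 := pim_mem_eig hm hζ hσ i0 y'
  set x0 : ↥LL := genE hm hζ σ hbr hσ i0 hy0 with hx0_def
  set c0 : ℤ →₀ g := Phi k g (↑(χ x0)) with hc0_def
  have hc0 : ∀ j, c0 j = e (j - i0) • y0 := fun j => hcoeff hy0 j
  -- e is supported on multiples of m, within the support of c0
  have hvanish : ∀ n : ℤ, e n ≠ 0 → (i0 + n) ∈ c0.support ∧ (m : ℤ) ∣ n := by
    intro n hn
    have h1 : c0 (i0 + n) = e n • y0 := by rw [hc0]; congr 1; ring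
    have h2 : c0 (i0 + n) ≠ 0 := by
      rw [h1]
      exact smul_ne_zero hn hy0ne
    constructor
    · exact Finsupp.mem_support_iff.mpr h2
    · -- eigenvalue argument
      have hz : e n • y0 ≠ 0 := smul_ne_zero hn hy0ne
      have h3 := coeff_eig (mem_loopAlgebra_iff.mp (χ x0).2) (i0 + n)
      rw [← hc0_def] at h3
      rw [h1] at h3
      rw [map_smul, hy0, smul_comm] at h3
      -- h3 : ζ ^ i0 • e n • y0 = ζ ^ (i0 + n) • e n • y0
      have h6 : ζ ^ i0 = ζ ^ (i0 + n) := smul_left_injective k hz h3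
      have hζ0 : ζ ≠ 0 := hζ.ne_zero hm.ne'
      have h7 : ζ ^ n = 1 := by
        have h8 : ζ ^ i0 * ζ ^ n = ζ ^ i0 * 1 := by
          rw [mul_one, ← zpow_add₀ hζ0, ← h6]
        exact mul_left_cancel₀ (zpow_ne_zero i0 hζ0) h8
      exact (hζ.zpow_eq_one_iff_dvd n).mp h7
  -- define p
  set p0 : LaurentPolynomial k := ∑ j ∈ c0.support, AddMonoidAlgebra.single (j - i0) (e (j - i0))
    with hp0_def
  have hp0_coeff : ∀ n : ℤ, p0.coeff n = e n := by
    intro n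
    have happ : p0.coeff n = ∑ j ∈ c0.support, (Finsupp.single (j - i0) (e (j - i0)) : ℤ →₀ k) n := by
      rw [hp0_def, AddMonoidAlgebra.coeff_sum]
      exact Finset.sum_apply' n
    rw [happ]
    by_cases hmem : (i0 + n) ∈ c0.support
    · rw [Finset.sum_eq_single (i0 + n)]
      · rw [Finsupp.single_apply, if_pos (by ring)]
        congr 1
        ring
      · intro j _ hj
        rw [Finsupp.single_apply, if_neg]
        intro hjn
        exact hj (by omega)
      · intro h; exact absurd hmem h
    · have hn : e n = 0 := by
        by_contra hn
        exact hmem (hvanish n hn).1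
      rw [hn]
      refine Finset.sum_eq_zero fun j hj => ?_
      rw [Finsupp.single_apply, if_neg]
      intro hjn
      have hj' : (i0 + n) ∈ c0.support := by
        rw [show i0 + n = j by omega]
        exact hj
      exact hmem hj'
  have hp0_mem : p0 ∈ Rsub k m := by
    refine Subalgebra.sum_mem _ fun j hj => ?_
    by_cases hz : e (j - i0) = 0
    · rw [hz, AddMonoidAlgebra.single_zero]
      exact Subalgebra.zero_mem _
    · have hdvd : (m : ℤ) ∣ (j - i0) := (hvanish (j - i0) hz).2
      rw [single_eq_C_mul_T]
      exact Subalgebra.mul_mem _ (by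
        rw [C_eq_algebraMap]; exact Subalgebra.algebraMap_mem _ _) (T_mem_Rsub hdvd)
  refine ⟨⟨p0, hp0_mem⟩, ?_, ?_⟩
  · -- existence
    intro x
    have key : ∀ w (hw : w ∈ loopCarrier ζ σ) (h2 : w ∈ LL),
        ((χ ⟨w, h2⟩ : ↥LL) : LaurentPolynomial k ⊗[k] g) = p0 • w := by
      intro w hw
      induction hw using Submodule.span_induction with
      | mem w' hw' =>
        intro h2
        obtain ⟨i, y, hy, rfl⟩ := hw'
        have hEq : (⟨T i ⊗ₜ[k] y, h2⟩ : ↥LL) = genE hm hζ σ hbr hσ i hy := rfl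
        rw [hEq]
        apply (Phi k g).injective
        ext j
        rw [hcoeff hy j]
        rw [TensorProduct.smul_tmul', smul_eq_mul, Phi_tmul_apply]
        have hmul : (p0 * T i : LaurentPolynomial k).coeff j = p0.coeff (j - i) := by
          have := AddMonoidAlgebra.coeff_mul_single_apply p0 1 i j
          have hT : (T i : LaurentPolynomial k) = AddMonoidAlgebra.single i 1 := rfl
          rw [hT, this, mul_one, sub_eq_add_neg]
        rw [hmul, hp0_coeff]
      | zero =>
        intro h2
        have : (⟨0, h2⟩ : ↥LL) = 0 := rfl
        rw [this, map_zero, smul_zero]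
        rfl
      | add u v hu hv ihu ihv =>
        intro h2
        have : (⟨u + v, h2⟩ : ↥LL)
            = ⟨u, mem_loopAlgebra_iff.mpr hu⟩ + ⟨v, mem_loopAlgebra_iff.mpr hv⟩ := rfl
        rw [this, map_add, smul_add]
        have hco : ((χ ⟨u, mem_loopAlgebra_iff.mpr hu⟩ + χ ⟨v, mem_loopAlgebra_iff.mpr hv⟩ : ↥LL) :
            LaurentPolynomial k ⊗[k] g)
            = ↑(χ ⟨u, mem_loopAlgebra_iff.mpr hu⟩) + ↑(χ ⟨v, mem_loopAlgebra_iff.mpr hv⟩) := rfl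
        rw [hco, ihu, ihv]
      | smul c u hu ihu =>
        intro h2
        have h5 : (⟨c • u, h2⟩ : ↥LL) = c • (⟨u, mem_loopAlgebra_iff.mpr hu⟩ : ↥LL) := rfl
        rw [h5, map_smul]
        have hco : ((c • χ ⟨u, mem_loopAlgebra_iff.mpr hu⟩ : ↥LL) :
            LaurentPolynomial k ⊗[k] g) = c • ↑(χ ⟨u, mem_loopAlgebra_iff.mpr hu⟩) := rfl
        rw [hco, ihu]
        conv_rhs => rw [← algebraMap_smul (LaurentPolynomial k) c u]
        rw [← algebraMap_smul (LaurentPolynomial k) c (p0 • u), smul_smul, smul_smul, mul_comm]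
    obtain ⟨w, hw⟩ := x
    exact key w (mem_loopAlgebra_iff.mp hw) hw
  · -- uniqueness
    intro q hq
    apply Subtype.ext
    have h1 := hq x0
    have h2 : ∀ j, Phi k g ((q : LaurentPolynomial k) • ((x0 : ↥LL) : LaurentPolynomial k ⊗[k] g)) j
        = (q : LaurentPolynomial k).coeff (j - i0) • y0 := by
      intro j
      have hx0co : ((x0 : ↥LL) : LaurentPolynomial k ⊗[k] g) = T i0 ⊗ₜ[k] y0 := rfl
      rw [hx0co, TensorProduct.smul_tmul', smul_eq_mul, Phi_tmul_apply]
      congr 1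
      have := AddMonoidAlgebra.coeff_mul_single_apply
        (q : LaurentPolynomial k) 1 i0 j
      have hT : (T i0 : LaurentPolynomial k) = AddMonoidAlgebra.single i0 1 := rfl
      rw [hT, this, mul_one, sub_eq_add_neg]
    ext n
    have h3 : Phi k g (↑(χ x0)) (n + i0) = e n • y0 := by
      rw [hcoeff hy0]
      congr 1
      ring
    have h4 := h2 (n + i0)
    rw [← h1, h3] at h4
    have h5 : (q : LaurentPolynomial k).coeff (n + i0 - i0) = (q : LaurentPolynomial k).coeff n := by
      congr 1
      ring
    rw [h5] at h4
    have h6 : e n = (q : LaurentPolynomial k).coeff n := by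
      exact smul_left_injective k hy0ne h4
    rw [hp0_coeff, h6]


variable {k : Type*} [Field k] {g : Type*} [LieRing g] [LieAlgebra k g]
variable {m : ℕ} {ζ : k}

end Main2

section Helpers

variable [CharZero k] (hm : 0 < m) (hζ : IsPrimitiveRoot ζ m)
variable (σ : g ≃ₗ[k] g) (hbr : IsLieAut σ) (hσ : σ ^ m = 1)

local notation "LL" => loopAlgebra m ζ (hζ.ne_zero hm.ne') hζ.pow_eq_one σ hbr hσ

theorem rsmul_ksmul (r : ↥(Rsub k m)) (c : k) (x : ↥LL) :
    r • (c • x) = c • (r • x) := by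
  apply Subtype.ext
  rw [loop_smul_coe]
  show (r : LaurentPolynomial k) • (c • (x : LaurentPolynomial k ⊗[k] g))
    = c • ((r • x : ↥LL) : LaurentPolynomial k ⊗[k] g)
  rw [loop_smul_coe]
  rw [← algebraMap_smul (LaurentPolynomial k) c (x : LaurentPolynomial k ⊗[k] g), smul_smul,
    ← algebraMap_smul (LaurentPolynomial k) c
      ((r : LaurentPolynomial k) • (x : LaurentPolynomial k ⊗[k] g)), smul_smul, mul_comm]

/-- Scalar multiplication by `r ∈ R` as a `k`-linear map on the loop algebra. -/
def smulLM (r : ↥(Rsub k m)) : ↥LL →ₗ[k] ↥LL where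
  toFun x := r • x
  map_add' x y := smul_add r x y
  map_smul' c x := rsmul_ksmul hm hζ σ hbr hσ r c x

theorem smul_bracket_right (r : ↥(Rsub k m)) (u v : ↥LL) :
    r • ⁅u, v⁆ = ⁅u, r • v⁆ := by
  apply Subtype.ext
  rw [loop_smul_coe]
  show (r : LaurentPolynomial k) • (⁅(u : LaurentPolynomial k ⊗[k] g), (v : LaurentPolynomial k ⊗[k] g)⁆)
    = ⁅(u : LaurentPolynomial k ⊗[k] g), (r : LaurentPolynomial k) • (v : LaurentPolynomial k ⊗[k] g)⁆
  exact (lie_smul (r : LaurentPolynomial k) (u : LaurentPolynomial k ⊗[k] g)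
    (v : LaurentPolynomial k ⊗[k] g)).symm

end Helpers

section TwoAlg

variable {k : Type*} [Field k] [CharZero k]
variable {g₁ : Type*} [LieRing g₁] [LieAlgebra k g₁]
variable {g₂ : Type*} [LieRing g₂] [LieAlgebra k g₂]
variable {m : ℕ} {ζ : k} (hm : 0 < m) (hζ : IsPrimitiveRoot ζ m)
variable (σ₁ : g₁ ≃ₗ[k] g₁) (hbr₁ : IsLieAut σ₁) (hσ₁ : σ₁ ^ m = 1)
variable (σ₂ : g₂ ≃ₗ[k] g₂) (hbr₂ : IsLieAut σ₂) (hσ₂ : σ₂ ^ m = 1)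

local notation "LL₁" => loopAlgebra m ζ (hζ.ne_zero hm.ne') hζ.pow_eq_one σ₁ hbr₁ hσ₁
local notation "LL₂" => loopAlgebra m ζ (hζ.ne_zero hm.ne') hζ.pow_eq_one σ₂ hbr₂ hσ₂

/-- Conjugation of the action of `r ∈ R` by an isomorphism of loop algebras. -/
def conjLM (φ : ↥LL₁ ≃ₗ[k] ↥LL₂) (r : ↥(Rsub k m)) : ↥LL₂ →ₗ[k] ↥LL₂ :=
  φ.toLinearMap ∘ₗ smulLM hm hζ σ₁ hbr₁ hσ₁ r ∘ₗ φ.symm.toLinearMap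

theorem conjLM_apply (φ : ↥LL₁ ≃ₗ[k] ↥LL₂) (r : ↥(Rsub k m)) (y : ↥LL₂) :
    conjLM hm hζ σ₁ hbr₁ hσ₁ σ₂ hbr₂ hσ₂ φ r y = φ (r • φ.symm y) := rfl

theorem symm_bracket (φ : ↥LL₁ ≃ₗ[k] ↥LL₂)
    (hφ : ∀ x y : ↥LL₁, φ ⁅x, y⁆ = ⁅φ x, φ y⁆) (x y : ↥LL₂) :
    φ.symm ⁅x, y⁆ = ⁅φ.symm x, φ.symm y⁆ := by
  apply φ.injective
  rw [φ.apply_symm_apply, hφ, φ.apply_symm_apply, φ.apply_symm_apply]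

theorem conjLM_cent (φ : ↥LL₁ ≃ₗ[k] ↥LL₂)
    (hφ : ∀ x y : ↥LL₁, φ ⁅x, y⁆ = ⁅φ x, φ y⁆) (r : ↥(Rsub k m)) (x y : ↥LL₂) :
    conjLM hm hζ σ₁ hbr₁ hσ₁ σ₂ hbr₂ hσ₂ φ r ⁅x, y⁆
      = ⁅x, conjLM hm hζ σ₁ hbr₁ hσ₁ σ₂ hbr₂ hσ₂ φ r y⁆ := by
  rw [conjLM_apply, conjLM_apply, symm_bracket hm hζ σ₁ hbr₁ hσ₁ σ₂ hbr₂ hσ₂ φ hφ,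
    smul_bracket_right hm hζ σ₁ hbr₁ hσ₁, hφ, φ.apply_symm_apply]

theorem conj_exists_unique [Nontrivial g₂]
    (hperf₂ : Submodule.span ℤ {w : g₂ | ∃ x y : g₂, ⁅x, y⁆ = w} = ⊤)
    (hcentral₂ : ∀ χ : g₂ →ₗ[k] g₂,
      (∀ x y : g₂, χ ⁅x, y⁆ = ⁅x, χ y⁆) → ∃ a : k, ∀ x : g₂, χ x = a • x)
    (φ : ↥LL₁ ≃ₗ[k] ↥LL₂) (hφ : ∀ x y : ↥LL₁, φ ⁅x, y⁆ = ⁅φ x, φ y⁆) (r : ↥(Rsub k m)) :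
    ∃! p : ↥(Rsub k m), ∀ y : ↥LL₂,
      ((conjLM hm hζ σ₁ hbr₁ hσ₁ σ₂ hbr₂ hσ₂ φ r y : ↥LL₂) : LaurentPolynomial k ⊗[k] g₂)
        = (p : LaurentPolynomial k) • (y : LaurentPolynomial k ⊗[k] g₂) :=
  centroid_main hm hζ σ₂ hbr₂ hσ₂ hperf₂ hcentral₂ _
    (conjLM_cent hm hζ σ₁ hbr₁ hσ₁ σ₂ hbr₂ hσ₂ φ hφ r)

end TwoAlg

end Chunk3

/-- Let `g₁, g₂` be nonzero Lie algebras over `k`, perfect and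
central over `k`, with period-`m` automorphisms `σ₁, σ₂`.  If
`φ : L(g₁,σ₁) → L(g₂,σ₂)` is an isomorphism of Lie algebras over `k`, then there is a
unique `k`-algebra automorphism `φ̃` of `R` with `φ(r·x) = φ̃(r)·φ(x)` for all
`x ∈ L(g₁,σ₁)`, `r ∈ R`. -/
theorem statement15 {k : Type*} [Field k] [CharZero k]
    {g₁ : Type*} [LieRing g₁] [LieAlgebra k g₁] [Nontrivial g₁]
    {g₂ : Type*} [LieRing g₂] [LieAlgebra k g₂] [Nontrivial g₂]
    (m : ℕ) (hm : 0 < m) (ζ : k) (hζ : IsPrimitiveRoot ζ m)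
    (hperf₁ : Submodule.span ℤ {w : g₁ | ∃ x y : g₁, ⁅x, y⁆ = w} = ⊤)
    (hcentral₁ : ∀ χ : g₁ →ₗ[k] g₁,
      (∀ x y : g₁, χ ⁅x, y⁆ = ⁅x, χ y⁆) → ∃ a : k, ∀ x : g₁, χ x = a • x)
    (hperf₂ : Submodule.span ℤ {w : g₂ | ∃ x y : g₂, ⁅x, y⁆ = w} = ⊤)
    (hcentral₂ : ∀ χ : g₂ →ₗ[k] g₂,
      (∀ x y : g₂, χ ⁅x, y⁆ = ⁅x, χ y⁆) → ∃ a : k, ∀ x : g₂, χ x = a • x)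
    (σ₁ : g₁ ≃ₗ[k] g₁) (hbr₁ : IsLieAut σ₁) (hσ₁ : σ₁ ^ m = 1)
    (σ₂ : g₂ ≃ₗ[k] g₂) (hbr₂ : IsLieAut σ₂) (hσ₂ : σ₂ ^ m = 1)
    (φ : ↥(loopAlgebra m ζ (hζ.ne_zero hm.ne') hζ.pow_eq_one σ₁ hbr₁ hσ₁) ≃ₗ[k]
         ↥(loopAlgebra m ζ (hζ.ne_zero hm.ne') hζ.pow_eq_one σ₂ hbr₂ hσ₂))
    (hφ : ∀ x y, φ ⁅x, y⁆ = ⁅φ x, φ y⁆) :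
    ∃! φt : ↥(Rsub k m) ≃ₐ[k] ↥(Rsub k m),
      ∀ (r : ↥(Rsub k m)) (x), φ (r • x) = φt r • φ x := by
  have hφsymm := symm_bracket hm hζ σ₁ hbr₁ hσ₁ σ₂ hbr₂ hσ₂ φ hφ
  have hφsymm2 : ∀ x y, φ.symm ⁅x, y⁆ = ⁅φ.symm x, φ.symm y⁆ := hφsymm
  have H : ∀ r : ↥(Rsub k m), ∃! p : ↥(Rsub k m),
      ∀ y, ((conjLM hm hζ σ₁ hbr₁ hσ₁ σ₂ hbr₂ hσ₂ φ r y :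
        ↥(loopAlgebra m ζ (hζ.ne_zero hm.ne') hζ.pow_eq_one σ₂ hbr₂ hσ₂)) :
          LaurentPolynomial k ⊗[k] g₂)
        = (p : LaurentPolynomial k) • (y : LaurentPolynomial k ⊗[k] g₂) :=
    conj_exists_unique hm hζ σ₁ hbr₁ hσ₁ σ₂ hbr₂ hσ₂ hperf₂ hcentral₂ φ hφ
  have H' : ∀ s : ↥(Rsub k m), ∃! p : ↥(Rsub k m),
      ∀ x, ((conjLM hm hζ σ₂ hbr₂ hσ₂ σ₁ hbr₁ hσ₁ φ.symm s x :
        ↥(loopAlgebra m ζ (hζ.ne_zero hm.ne') hζ.pow_eq_one σ₁ hbr₁ hσ₁)) :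
          LaurentPolynomial k ⊗[k] g₁)
        = (p : LaurentPolynomial k) • (x : LaurentPolynomial k ⊗[k] g₁) :=
    conj_exists_unique hm hζ σ₂ hbr₂ hσ₂ σ₁ hbr₁ hσ₁ hperf₁ hcentral₁ φ.symm hφsymm2
  set θ : ↥(Rsub k m) → ↥(Rsub k m) := fun r => (H r).choose with hθdef
  have hθ : ∀ r y, ((conjLM hm hζ σ₁ hbr₁ hσ₁ σ₂ hbr₂ hσ₂ φ r y : _) :
      LaurentPolynomial k ⊗[k] g₂)
      = ((θ r : ↥(Rsub k m)) : LaurentPolynomial k) • (y : LaurentPolynomial k ⊗[k] g₂) :=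
    fun r => (H r).choose_spec.1
  have hθu : ∀ (r : ↥(Rsub k m)) (p : ↥(Rsub k m)), (∀ y, ((conjLM hm hζ σ₁ hbr₁ hσ₁ σ₂ hbr₂ hσ₂ φ r y : _) :
      LaurentPolynomial k ⊗[k] g₂)
      = (p : LaurentPolynomial k) • (y : LaurentPolynomial k ⊗[k] g₂)) → p = θ r :=
    fun r => (H r).choose_spec.2
  set θ' : ↥(Rsub k m) → ↥(Rsub k m) := fun s => (H' s).choose with hθ'def
  have hθ' : ∀ s x, ((conjLM hm hζ σ₂ hbr₂ hσ₂ σ₁ hbr₁ hσ₁ φ.symm s x : _) :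
      LaurentPolynomial k ⊗[k] g₁)
      = ((θ' s : ↥(Rsub k m)) : LaurentPolynomial k) • (x : LaurentPolynomial k ⊗[k] g₁) :=
    fun s => (H' s).choose_spec.1
  have hθ'u : ∀ (s : ↥(Rsub k m)) (p : ↥(Rsub k m)), (∀ x, ((conjLM hm hζ σ₂ hbr₂ hσ₂ σ₁ hbr₁ hσ₁ φ.symm s x : _) :
      LaurentPolynomial k ⊗[k] g₁)
      = (p : LaurentPolynomial k) • (x : LaurentPolynomial k ⊗[k] g₁)) → p = θ' s :=
    fun s => (H' s).choose_spec.2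
  -- the fundamental property of θ
  have hθeq : ∀ r x, φ (r • x) = θ r • φ x := by
    intro r x
    apply Subtype.ext
    have h1 := hθ r (φ x)
    rw [conjLM_apply, φ.symm_apply_apply] at h1
    rw [loop_smul_coe]
    exact h1
  have hθ'eq : ∀ s y, φ.symm (s • y) = θ' s • φ.symm y := by
    intro s y
    apply Subtype.ext
    have h1 := hθ' s (φ.symm y)
    rw [conjLM_apply, LinearEquiv.symm_symm, φ.apply_symm_apply] at h1
    rw [loop_smul_coe]
    exact h1
  -- inverse properties
  have hleft : ∀ r, θ' (θ r) = r := by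
    intro r
    refine (hθ'u (θ r) r ?_).symm
    intro x
    rw [conjLM_apply, LinearEquiv.symm_symm, ← hθeq, φ.symm_apply_apply, ← loop_smul_coe]
  have hright : ∀ s, θ (θ' s) = s := by
    intro s
    refine (hθu (θ' s) s ?_).symm
    intro y
    rw [conjLM_apply, ← hθ'eq, φ.apply_symm_apply, ← loop_smul_coe]
  -- algebraic properties
  have hadd : ∀ r s, θ (r + s) = θ r + θ s := by
    intro r s
    refine (hθu (r + s) (θ r + θ s) ?_).symm
    intro y
    rw [conjLM_apply]
    have h1 : (r + s) • φ.symm y = r • φ.symm y + s • φ.symm y := by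
      apply Subtype.ext
      rw [loop_smul_coe]
      show ((r : LaurentPolynomial k) + s) • ((φ.symm y : _) : LaurentPolynomial k ⊗[k] g₁) = _
      rw [add_smul]
      rfl
    rw [h1, map_add, hθeq, hθeq, φ.apply_symm_apply]
    show ((θ r • y + θ s • y : _) : LaurentPolynomial k ⊗[k] g₂) = _
    have h2 : ((θ r • y + θ s • y : _) : LaurentPolynomial k ⊗[k] g₂)
        = ((θ r : ↥(Rsub k m)) : LaurentPolynomial k) • (y : LaurentPolynomial k ⊗[k] g₂)
          + ((θ s : ↥(Rsub k m)) : LaurentPolynomial k) • (y : LaurentPolynomial k ⊗[k] g₂) := rfl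
    rw [h2, ← add_smul]
    rfl
  have hmul : ∀ r s, θ (r * s) = θ r * θ s := by
    intro r s
    refine (hθu (r * s) (θ r * θ s) ?_).symm
    intro y
    rw [conjLM_apply]
    have h1 : (r * s) • φ.symm y = r • (s • φ.symm y) := mul_smul r s (φ.symm y)
    rw [h1, hθeq, hθeq, φ.apply_symm_apply]
    show ((θ r • (θ s • y) : _) : LaurentPolynomial k ⊗[k] g₂) = _
    rw [loop_smul_coe, loop_smul_coe, smul_smul]
    rfl
  have hcommutes : ∀ c : k, θ (algebraMap k ↥(Rsub k m) c) = algebraMap k ↥(Rsub k m) c := by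
    intro c
    refine (hθu _ (algebraMap k ↥(Rsub k m) c) ?_).symm
    intro y
    rw [conjLM_apply]
    have h1 : (algebraMap k ↥(Rsub k m) c) • φ.symm y = c • φ.symm y := by
      apply Subtype.ext
      rw [loop_smul_coe]
      show ((algebraMap k ↥(Rsub k m) c : ↥(Rsub k m)) : LaurentPolynomial k) • _ = _
      rw [Subalgebra.coe_algebraMap, algebraMap_smul]
      rfl
    rw [h1, map_smul, φ.apply_symm_apply]
    show ((c • y : _) : LaurentPolynomial k ⊗[k] g₂) = _
    rw [Subalgebra.coe_algebraMap, algebraMap_smul]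
    rfl
  -- assemble the algebra equivalence
  refine ⟨{ toFun := θ, invFun := θ', left_inv := hleft, right_inv := hright,
            map_mul' := hmul, map_add' := hadd, commutes' := hcommutes }, ?_, ?_⟩
  · intro r x
    exact hθeq r x
  · intro ψ hψ
    apply AlgEquiv.ext
    intro r
    show ψ r = θ r
    refine hθu r (ψ r) ?_
    intro y
    rw [conjLM_apply, hψ r (φ.symm y), φ.apply_symm_apply, ← loop_smul_coe]


end LoopPaper
end
end

section
/- (Erasing theorem) Let Q be a free abelian group and let g = ⊕_{α∈Q} g_α be a Q-graded Lie algebra over k (so [g_α, g_β] ⊆ g_{α+β} for all α, β ∈ Q) such that Q is generated as a group by the support {α ∈ Q : g_α ≠ 0}. Suppose τ and ρ are k-algebra automorphisms of g satisfying: (i) τ^m = ρ^m = id and τρ = ρτ; (ii) there exists a group homomorphism r : Q → k^× with ρ(x) = r(α)·x for all x ∈ g_α and α ∈ Q; (iii) there exists a group automorphism τ̂ of Q with τ(g_α) = g_{τ̂(α)} for all α ∈ Q. Assume further that for every positive integer d there is a primitive dm-th root of unity ξ_d ∈ k with ξ_d^d = ζ. Then L(g, τρ) and L(g, τ) are isomorphic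 as Lie algebras over R. -/
/-!
`L(g, σ)` is the fixed-point set of the semilinear automorphism `p ⊗ x ↦ p(ζ⁻¹ z) ⊗ σ x` of
`g(S)`, so it suffices to find an `S`-linear Lie automorphism `w` of `g(S)` intertwining these
twists for `τρ` and for `τ`. We take `w` diagonal for the grading, `x_α ↦ s(α) z^{ν(α)} x_α`
with a character `s : Q → kˣ` and `ν : Q →+ ℤ`; this works as soon as `ν ∘ τ̂ = ν` and
`r(α) s(τ̂ α) = ζ^{-ν(α)} s(α)`. Since the support generates `Q`, the relations `ρ^m = 1`,
`τρ = ρτ` and `τ^m = 1` give `r^m = 1`, `r ∘ τ̂ = r` and `τ̂^m = 1`. As `Q` is free,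
`r = ζ^{-b}` for some `b : Q →+ ℤ`, and then `b ∘ τ̂ ≡ b (mod m)`. Summing over `τ̂`-orbits,
`ν = (1/m) ∑_{j<m} b ∘ τ̂^j` and `s = ξ^{∑_{j<m} j • b ∘ τ̂^j}` with `ξ^m = ζ` solve both
equations.
-/

open scoped TensorProduct
open LaurentPolynomial

set_option maxHeartbeats 1000000
set_option synthInstance.maxHeartbeats 400000

noncomputable section

namespace LoopPaper

variable {k : Type*} [Field k] {g : Type*} [LieRing g] [LieAlgebra k g]

theorem _root_.TensorProduct.span_tmul_mem_iSup_eq_top {R M N ι : Type*} [CommSemiring R]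
    [AddCommMonoid M] [AddCommMonoid N] [Module R M] [Module R N] {G : ι → Submodule R N}
    (hG : ⨆ i, G i = ⊤) :
    Submodule.span R {t : M ⊗[R] N | ∃ (m : M) (i : ι), ∃ n ∈ G i, t = m ⊗ₜ n} = ⊤ := by
  rw [eq_top_iff, ← TensorProduct.span_tmul_eq_top, Submodule.span_le]
  rintro _ ⟨m, n, rfl⟩
  have hn : n ∈ ⨆ i, G i := hG ▸ Submodule.mem_top
  induction hn using Submodule.iSup_induction' with
  | mem i n hn => exact Submodule.subset_span ⟨m, i, n, hn, rfl⟩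
  | zero => simp
  | add n n' _ _ hn hn' => rw [TensorProduct.tmul_add]; exact add_mem hn hn'

theorem _root_.AddChar.eq_of_eqOn_closure {A M : Type*} [AddGroup A] [Monoid M] {S : Set A}
    (hS : AddSubgroup.closure S = ⊤) {ψ ψ' : AddChar A M} (h : Set.EqOn ψ ψ' S) : ψ = ψ' :=
  AddChar.toAddMonoidHomEquiv.injective <|
    AddMonoidHom.eq_of_eqOn_dense hS fun _ hα => congrArg Additive.ofMul (h hα)

theorem _root_.LinearEquiv.pow_apply_of_apply_eq_smul {R M : Type*} [CommSemiring R]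
    [AddCommMonoid M] [Module R M] {e : M ≃ₗ[R] M} {c : R} {x : M} (hx : e x = c • x) (n : ℕ) :
    (e ^ n) x = c ^ n • x := by
  induction n with
  | zero => simp
  | succ n ih => rw [pow_succ, LinearEquiv.mul_apply, hx, map_smul, ih, smul_smul, pow_succ']

def twist (c : kˣ) (σ : g ≃ₗ[k] g) : Module.End k (LaurentPolynomial k ⊗[k] g) :=
  TensorProduct.map (scaleVar c).toLinearMap σ.toLinearMap

theorem twist_tmul (c : kˣ) (σ : g ≃ₗ[k] g) (p : LaurentPolynomial k) (x : g) :
    twist c σ (p ⊗ₜ x) = scaleVar c p ⊗ₜ σ x := rfl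

theorem basis_repr_scaleVar (c : kˣ) (p : LaurentPolynomial k) (i : ℤ) :
    (AddMonoidAlgebra.basis ℤ k).repr (scaleVar c p) i =
      ((c ^ i : kˣ) : k) * (AddMonoidAlgebra.basis ℤ k).repr p i := by
  have h : ((AddMonoidAlgebra.basis ℤ k).coord i).comp (scaleVar c).toLinearMap =
      ((c ^ i : kˣ) : k) • (AddMonoidAlgebra.basis ℤ k).coord i := by
    refine (AddMonoidAlgebra.basis ℤ k).ext fun j => ?_
    have hT : AddMonoidAlgebra.basis ℤ k j = T j := rfl
    rw [LinearMap.comp_apply, LinearMap.smul_apply, AlgHom.toLinearMap_apply, hT, scaleVar_T,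
      map_smul, ← hT, Module.Basis.coord_apply, Module.Basis.repr_self, smul_eq_mul, smul_eq_mul,
      Finsupp.single_apply]
    split_ifs with hji
    · rw [hji]
    · simp
  exact congr($h p)

theorem equivFinsuppOfBasisLeft_twist (c : kˣ) (σ : g ≃ₗ[k] g) (a : LaurentPolynomial k ⊗[k] g)
    (i : ℤ) :
    TensorProduct.equivFinsuppOfBasisLeft (AddMonoidAlgebra.basis ℤ k) (twist c σ a) i =
      ((c ^ i : kˣ) : k) •
        σ (TensorProduct.equivFinsuppOfBasisLeft (AddMonoidAlgebra.basis ℤ k) a i) := by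
  induction a using TensorProduct.induction_on with
  | zero => simp
  | tmul p x =>
    rw [twist_tmul, TensorProduct.equivFinsuppOfBasisLeft_apply_tmul_apply,
      TensorProduct.equivFinsuppOfBasisLeft_apply_tmul_apply, basis_repr_scaleVar, map_smul,
      smul_smul]
  | add a b ha hb => simp only [map_add, Finsupp.add_apply, ha, hb, smul_add]

theorem mem_loopCarrier_iff_twist_eq {ζ : k} (hζ0 : ζ ≠ 0) {σ : g ≃ₗ[k] g}
    {a : LaurentPolynomial k ⊗[k] g} :
    a ∈ loopCarrier ζ σ ↔ twist (Units.mk0 ζ hζ0)⁻¹ σ a = a := by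
  have hc : ∀ i : ℤ, (((Units.mk0 ζ hζ0)⁻¹ ^ i : kˣ) : k) = (ζ ^ i)⁻¹ := fun i => by simp
  constructor
  · intro ha
    refine (Submodule.span_le (p := LinearMap.eqLocus (twist (Units.mk0 ζ hζ0)⁻¹ σ)
      LinearMap.id)).2 ?_ ha
    rintro _ ⟨i, x, hx, rfl⟩
    show twist _ σ (T i ⊗ₜ x) = T i ⊗ₜ x
    rw [twist_tmul, scaleVar_T, hx, TensorProduct.smul_tmul, smul_smul, hc,
      inv_mul_cancel₀ (zpow_ne_zero i hζ0), one_smul]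
  · intro ha
    set E := TensorProduct.equivFinsuppOfBasisLeft (M := LaurentPolynomial k) (N := g)
      (AddMonoidAlgebra.basis ℤ k)
    have hE : ∀ i, σ (E a i) = ζ ^ i • E a i := fun i => by
      conv_rhs => rw [← ha, equivFinsuppOfBasisLeft_twist, hc, smul_smul,
        mul_inv_cancel₀ (zpow_ne_zero i hζ0), one_smul]
    rw [← E.symm_apply_apply a, TensorProduct.equivFinsuppOfBasisLeft_symm_apply]
    exact Submodule.finsuppSum_mem _ _ _ _ fun i _ => Submodule.subset_span ⟨i, _, hE i, rfl⟩

theorem exists_loopAlgebra_lieEquiv {m : ℕ} {ζ : k} {hζ0 : ζ ≠ 0} {hζm : ζ ^ m = 1}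
    {σ₁ σ₂ : g ≃ₗ[k] g} {hbr₁ : IsLieAut σ₁} {hbr₂ : IsLieAut σ₂} {hσ₁ : σ₁ ^ m = 1}
    {hσ₂ : σ₂ ^ m = 1}
    (w : LaurentPolynomial k ⊗[k] g ≃ₗ[LaurentPolynomial k] LaurentPolynomial k ⊗[k] g)
    (hw_lie : ∀ a b, w ⁅a, b⁆ = ⁅w a, w b⁆)
    (hw : ∀ a, w (twist (Units.mk0 ζ hζ0)⁻¹ σ₁ a) = twist (Units.mk0 ζ hζ0)⁻¹ σ₂ (w a)) :
    ∃ e : loopAlgebra m ζ hζ0 hζm σ₁ hbr₁ hσ₁ ≃ₗ[Rsub k m] loopAlgebra m ζ hζ0 hζm σ₂ hbr₂ hσ₂,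
      ∀ x y, e ⁅x, y⁆ = ⁅e x, e y⁆ := by
  have hw_mem : ∀ a ∈ loopCarrier ζ σ₁, w a ∈ loopCarrier ζ σ₂ := fun a ha => by
    rw [mem_loopCarrier_iff_twist_eq hζ0] at ha ⊢
    rw [← hw, ha]
  have hw_symm_mem : ∀ a ∈ loopCarrier ζ σ₂, w.symm a ∈ loopCarrier ζ σ₁ := fun a ha => by
    rw [mem_loopCarrier_iff_twist_eq hζ0] at ha ⊢
    rw [← w.injective.eq_iff, hw, LinearEquiv.apply_symm_apply, ha]
  refine ⟨
    { toFun := fun x => ⟨w x.1, hw_mem x.1 x.2⟩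
      invFun := fun y => ⟨w.symm y.1, hw_symm_mem y.1 y.2⟩
      map_add' := fun x y => Subtype.ext (map_add w x.1 y.1)
      map_smul' := fun c x => Subtype.ext (w.map_smul (c : LaurentPolynomial k) x.1)
      left_inv := fun x => Subtype.ext (w.symm_apply_apply x.1)
      right_inv := fun y => Subtype.ext (w.apply_symm_apply y.1) },
    fun x y => Subtype.ext (hw_lie x.1 y.1)⟩

section GradedScale

variable {Q : Type*} [AddCommGroup Q] [DecidableEq Q] {G : Q → Submodule k g}

def gradedScale (hG : DirectSum.IsInternal G) (s : AddChar Q kˣ) (ν : Q →+ ℤ) :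
    LaurentPolynomial k ⊗[k] g →ₗ[LaurentPolynomial k] LaurentPolynomial k ⊗[k] g :=
  LinearMap.liftBaseChange _ <|
    DirectSum.toModule k Q _
        (fun α => (TensorProduct.mk k _ g (((s α : kˣ) : k) • T (ν α))).comp (G α).subtype) ∘ₗ
      (LinearEquiv.ofBijective (DirectSum.coeLinearMap G) hG).symm.toLinearMap

theorem gradedScale_tmul (hG : DirectSum.IsInternal G) (s : AddChar Q kˣ) (ν : Q →+ ℤ)
    {α : Q} {x : g} (hx : x ∈ G α) (p : LaurentPolynomial k) :
    gradedScale hG s ν (p ⊗ₜ x) = (((s α : kˣ) : k) • (p * T (ν α))) ⊗ₜ x := by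
  have hsymm : (LinearEquiv.ofBijective (DirectSum.coeLinearMap G) hG).symm x =
      DirectSum.lof k Q (fun α => G α) α ⟨x, hx⟩ := by
    rw [LinearEquiv.symm_apply_eq]
    exact (DirectSum.coeLinearMap_of G α ⟨x, hx⟩).symm
  rw [gradedScale, LinearMap.liftBaseChange_tmul, LinearMap.comp_apply,
    LinearEquiv.coe_toLinearMap, hsymm, DirectSum.toModule_lof, LinearMap.comp_apply,
    Submodule.subtype_apply, TensorProduct.mk_apply, TensorProduct.smul_tmul', smul_eq_mul,
    mul_smul_comm]

theorem gradedScale_comp (hG : DirectSum.IsInternal G) (s t : AddChar Q kˣ) (ν μ : Q →+ ℤ) :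
    (gradedScale hG s ν).comp (gradedScale hG t μ) = gradedScale hG (s * t) (ν + μ) := by
  refine LinearMap.restrictScalars_injective k <| LinearMap.ext_on
    (TensorProduct.span_tmul_mem_iSup_eq_top hG.submodule_iSup_eq_top) ?_
  rintro _ ⟨p, α, x, hx, rfl⟩
  simp only [LinearMap.restrictScalars_apply, LinearMap.comp_apply, gradedScale_tmul _ _ _ hx,
    AddChar.mul_apply, Units.val_mul, AddMonoidHom.add_apply, T_add, Algebra.smul_def, map_mul]
  congr 1
  ring

theorem gradedScale_one_zero (hG : DirectSum.IsInternal G) :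
    gradedScale hG 1 0 = LinearMap.id := by
  refine LinearMap.restrictScalars_injective k <| LinearMap.ext_on
    (TensorProduct.span_tmul_mem_iSup_eq_top hG.submodule_iSup_eq_top) ?_
  rintro _ ⟨p, α, x, hx, rfl⟩
  simp [gradedScale_tmul _ _ _ hx]

def gradedScaleEquiv (hG : DirectSum.IsInternal G) (s : AddChar Q kˣ) (ν : Q →+ ℤ) :
    LaurentPolynomial k ⊗[k] g ≃ₗ[LaurentPolynomial k] LaurentPolynomial k ⊗[k] g :=
  LinearEquiv.ofLinearMap (gradedScale hG s ν) (gradedScale hG s⁻¹ (-ν))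
    (by rw [gradedScale_comp, mul_inv_cancel, add_neg_cancel, gradedScale_one_zero])
    (by rw [gradedScale_comp, inv_mul_cancel, neg_add_cancel, gradedScale_one_zero])

theorem gradedScale_lie (hG : DirectSum.IsInternal G)
    (hgraded : ∀ α β : Q, ∀ x ∈ G α, ∀ y ∈ G β, ⁅x, y⁆ ∈ G (α + β))
    (s : AddChar Q kˣ) (ν : Q →+ ℤ) (a b : LaurentPolynomial k ⊗[k] g) :
    gradedScale hG s ν ⁅a, b⁆ = ⁅gradedScale hG s ν a, gradedScale hG s ν b⁆ := by
  let w := (gradedScale hG s ν).restrictScalars k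
  have hspan := TensorProduct.span_tmul_mem_iSup_eq_top (M := LaurentPolynomial k)
    hG.submodule_iSup_eq_top
  let bracket : LaurentPolynomial k ⊗[k] g →ₗ[k] LaurentPolynomial k ⊗[k] g →ₗ[k]
      LaurentPolynomial k ⊗[k] g :=
    LinearMap.mk₂ k (fun a b => ⁅a, b⁆) (fun a a' b => add_lie a a' b)
      (fun c a b => smul_lie c a b) (fun a b b' => lie_add a b b') fun c a b => lie_smul c a b
  have key : bracket.compr₂ w = bracket.compl₁₂ w w := by
    refine LinearMap.ext_on hspan ?_
    rintro _ ⟨p, α, x, hx, rfl⟩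
    refine LinearMap.ext_on hspan ?_
    rintro _ ⟨q, β, y, hy, rfl⟩
    simp only [LinearMap.compr₂_apply, LinearMap.compl₁₂_apply, LinearMap.mk₂_apply, bracket, w,
      LinearMap.restrictScalars_apply, gradedScale_tmul _ _ _ hx, gradedScale_tmul _ _ _ hy,
      LieAlgebra.ExtendScalars.bracket_tmul, gradedScale_tmul _ _ _ (hgraded α β x hx y hy),
      AddChar.map_add_eq_mul, Units.val_mul, map_add, T_add, Algebra.smul_def, map_mul]
    congr 1
    ring
  exact congr($key a b)

theorem gradedScale_twist (hG : DirectSum.IsInternal G) {τ ρ : g ≃ₗ[k] g} {φ : Q → Q}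
    (hτ : ∀ α, ∀ x ∈ G α, τ x ∈ G (φ α)) {r : Q → kˣ}
    (hρ : ∀ α, ∀ x ∈ G α, ρ x = (r α : k) • x) {c : kˣ} {s : AddChar Q kˣ} {ν : Q →+ ℤ}
    (hν : ∀ α, ν (φ α) = ν α) (hs : ∀ α, r α * s (φ α) = c ^ ν α * s α)
    (a : LaurentPolynomial k ⊗[k] g) :
    gradedScale hG s ν (twist c (τ * ρ) a) = twist c τ (gradedScale hG s ν a) := by
  suffices h : (gradedScale hG s ν).restrictScalars k ∘ₗ twist c (τ * ρ) =
      twist c τ ∘ₗ (gradedScale hG s ν).restrictScalars k from congr($h a)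
  refine LinearMap.ext_on (TensorProduct.span_tmul_mem_iSup_eq_top hG.submodule_iSup_eq_top) ?_
  rintro _ ⟨p, α, x, hx, rfl⟩
  have hτρ : (τ * ρ) x = (r α : k) • τ x := by rw [LinearEquiv.mul_apply, hρ α x hx, map_smul]
  have hs' := congrArg (fun u : kˣ => algebraMap k (LaurentPolynomial k) u) (hs α)
  simp only [Units.val_mul, Units.val_zpow_eq_zpow_val, map_mul] at hs'
  simp only [LinearMap.comp_apply, LinearMap.restrictScalars_apply, twist_tmul, hτρ,
    TensorProduct.tmul_smul, gradedScale_tmul _ _ _ (hτ α x hx), gradedScale_tmul _ _ _ hx, hν,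
    map_smul, map_mul, scaleVar_T, Algebra.smul_def, Units.val_zpow_eq_zpow_val]
  rw [TensorProduct.smul_tmul', Algebra.smul_def, AlgHom.commutes]
  congr 1
  linear_combination (scaleVar c p * (T (ν α) : LaurentPolynomial k)) * hs'

end GradedScale

theorem _root_.Finset.sum_range_succ_eq_of_eq {M : Type*} [AddCancelCommMonoid M] (f : ℕ → M)
    {m : ℕ} (hf : f m = f 0) : ∑ j ∈ Finset.range m, f (j + 1) = ∑ j ∈ Finset.range m, f j := by
  have h := (Finset.sum_range_succ' f m).symm.trans (Finset.sum_range_succ f m)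
  rw [hf] at h
  exact add_right_cancel h

theorem _root_.Finset.sum_range_natCast_mul_succ {R : Type*} [CommRing R] (f : ℕ → R) (m : ℕ) :
    ∑ j ∈ Finset.range m, (j : R) * f (j + 1) =
      ∑ j ∈ Finset.range m, (j : R) * f j + m * f m - ∑ j ∈ Finset.range m, f (j + 1) := by
  have h := (Finset.sum_range_succ' (fun j => (j : R) * f j) m).symm.trans
    (Finset.sum_range_succ _ m)
  simp only [Nat.cast_add, Nat.cast_one, add_mul, one_mul, Finset.sum_add_distrib, Nat.cast_zero,
    zero_mul, add_zero] at h
  linear_combination h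

section OrbitSum

variable {Q : Type*} [AddCommGroup Q] (φ : AddMonoid.End Q) (m : ℕ) (b : Q →+ ℤ)

def orbitSum : Q →+ ℤ := ∑ j ∈ Finset.range m, b.comp (φ ^ j)

def weightedOrbitSum : Q →+ ℤ := ∑ j ∈ Finset.range m, (j : ℤ) • b.comp (φ ^ j)

theorem orbitSum_apply (α : Q) : orbitSum φ m b α = ∑ j ∈ Finset.range m, b ((φ ^ j) α) := by
  simp only [orbitSum, AddMonoidHom.finsetSum_apply]
  rfl

theorem weightedOrbitSum_apply (α : Q) :
    weightedOrbitSum φ m b α = ∑ j ∈ Finset.range m, (j : ℤ) * b ((φ ^ j) α) := by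
  simp only [weightedOrbitSum, AddMonoidHom.finsetSum_apply, AddMonoidHom.smul_apply, smul_eq_mul]
  rfl

variable {φ m}

theorem _root_.AddMonoid.End.pow_apply_map (j : ℕ) (α : Q) : (φ ^ j) (φ α) = (φ ^ (j + 1)) α := by
  rw [pow_succ]
  rfl

theorem orbitSum_map (hφ : φ ^ m = 1) (α : Q) : orbitSum φ m b (φ α) = orbitSum φ m b α := by
  simp only [orbitSum_apply, AddMonoid.End.pow_apply_map]
  exact Finset.sum_range_succ_eq_of_eq (fun j => b ((φ ^ j) α)) (by rw [hφ, pow_zero])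

theorem weightedOrbitSum_map (hφ : φ ^ m = 1) (α : Q) :
    weightedOrbitSum φ m b (φ α) = weightedOrbitSum φ m b α + m * b α - orbitSum φ m b α := by
  rw [← orbitSum_map b hφ]
  simp only [weightedOrbitSum_apply, orbitSum_apply, AddMonoid.End.pow_apply_map]
  rw [Finset.sum_range_natCast_mul_succ (fun j => b ((φ ^ j) α)), hφ]
  rfl

theorem dvd_orbitSum (hb : ∀ α, (m : ℤ) ∣ b (φ α) - b α) (α : Q) :
    (m : ℤ) ∣ orbitSum φ m b α := by
  have hj : ∀ j, (m : ℤ) ∣ b ((φ ^ j) α) - b α := fun j => by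
    induction j with
    | zero => simp
    | succ j ih =>
      rw [← sub_add_sub_cancel _ (b ((φ ^ j) α)), pow_succ']
      exact dvd_add (hb _) ih
  have hsplit : orbitSum φ m b α = ∑ j ∈ Finset.range m, (b ((φ ^ j) α) - b α) + m * b α := by
    simp [orbitSum_apply, Finset.sum_sub_distrib]
  rw [hsplit]
  exact dvd_add (Finset.dvd_sum fun j _ => hj j) (dvd_mul_right _ _)

theorem exists_invariant_of_dvd_sub (hφ : φ ^ m = 1) (hb : ∀ α, (m : ℤ) ∣ b (φ α) - b α) :
    ∃ a ν : Q →+ ℤ, (∀ α, ν (φ α) = ν α) ∧ ∀ α, a (φ α) = a α + m * (b α - ν α) := by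
  let ν : Q →+ ℤ := AddMonoidHom.mk' (fun α => orbitSum φ m b α / m) fun α β => by
    rw [map_add, Int.add_ediv_of_dvd_left (dvd_orbitSum b hb α)]
  refine ⟨weightedOrbitSum φ m b, ν, fun α => by simp [ν, orbitSum_map b hφ], fun α => ?_⟩
  simp only [weightedOrbitSum_map b hφ, ν, AddMonoidHom.mk'_apply, mul_sub,
    Int.mul_ediv_cancel' (dvd_orbitSum b hb α)]
  ring

end OrbitSum

section Characters

variable {Q : Type*} [AddCommGroup Q] {G : Q → Submodule k g}

theorem addChar_pow_eq_one_of_pow_eq_one (hsupp : AddSubgroup.closure {α | G α ≠ ⊥} = ⊤)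
    {ρ : g ≃ₗ[k] g} {m : ℕ} (hρ : ρ ^ m = 1) {χ : AddChar Q kˣ}
    (hχ : ∀ α, ∀ x ∈ G α, ρ x = (χ α : k) • x) : χ ^ m = 1 := by
  refine AddChar.eq_of_eqOn_closure hsupp fun α hα => ?_
  obtain ⟨x, hx, hx0⟩ := (Submodule.ne_bot_iff _).mp hα
  have h := LinearEquiv.pow_apply_of_apply_eq_smul (hχ α x hx) m
  rw [hρ, LinearEquiv.coe_one, id] at h
  rw [AddChar.pow_apply, AddChar.one_apply]
  refine Units.ext (smul_left_injective k hx0 ?_)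
  simpa using h.symm

theorem addChar_compAddMonoidHom_eq_of_commute
    (hsupp : AddSubgroup.closure {α | G α ≠ ⊥} = ⊤) {τ ρ : g ≃ₗ[k] g} (hcomm : τ * ρ = ρ * τ)
    {φ : Q →+ Q} (hτ : ∀ α, ∀ x ∈ G α, τ x ∈ G (φ α)) {χ : AddChar Q kˣ}
    (hχ : ∀ α, ∀ x ∈ G α, ρ x = (χ α : k) • x) : χ.compAddMonoidHom φ = χ := by
  refine AddChar.eq_of_eqOn_closure hsupp fun α hα => ?_
  obtain ⟨x, hx, hx0⟩ := (Submodule.ne_bot_iff _).mp hα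
  have h := congr($hcomm x)
  rw [LinearEquiv.mul_apply, LinearEquiv.mul_apply, hχ α x hx, map_smul,
    hχ (φ α) (τ x) (hτ α x hx)] at h
  exact Units.ext (smul_left_injective k ((LinearEquiv.map_ne_zero_iff τ).mpr hx0) h.symm)

theorem pow_eq_one_of_mapsTo_grading [DecidableEq Q] (hG : DirectSum.IsInternal G)
    (hsupp : AddSubgroup.closure {α | G α ≠ ⊥} = ⊤) {τ : g ≃ₗ[k] g} {m : ℕ} (hτm : τ ^ m = 1)
    {φ : AddMonoid.End Q} (hτ : ∀ α, ∀ x ∈ G α, τ x ∈ G (φ α)) : φ ^ m = 1 := by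
  have hpow : ∀ n α, ∀ x ∈ G α, (τ ^ n) x ∈ G ((φ ^ n) α) := by
    intro n
    induction n with
    | zero => simp
    | succ n ih =>
      intro α x hx
      rw [pow_succ' τ, LinearEquiv.mul_apply, pow_succ' φ]
      exact hτ _ _ (ih α x hx)
  refine AddMonoidHom.eq_of_eqOn_dense hsupp fun α hα => ?_
  obtain ⟨x, hx, hx0⟩ := (Submodule.ne_bot_iff _).mp hα
  by_contra hne
  have hxm := hpow m α x hx
  rw [hτm, LinearEquiv.coe_one, id] at hxm
  exact hx0 ((Submodule.disjoint_def.mp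
    (hG.submodule_iSupIndep.pairwiseDisjoint hne)) x hxm hx)

theorem exists_addMonoidHom_zpow_eq [Module.Free ℤ Q] {m : ℕ} [NeZero m] {ζ : kˣ}
    (hζ : IsPrimitiveRoot ζ m) {χ : AddChar Q kˣ} (hχ : χ ^ m = 1) :
    ∃ b : Q →+ ℤ, ∀ α, ζ ^ b α = χ α := by
  let B := Module.Free.chooseBasis ℤ Q
  have hroot : ∀ i, ∃ n : ℕ, ζ ^ n = χ (B i) := fun i => by
    have hmem : χ (B i) ∈ rootsOfUnity m k := by
      rw [mem_rootsOfUnity, ← AddChar.pow_apply, hχ, AddChar.one_apply]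
    obtain ⟨n, -, hn⟩ := hζ.eq_pow_of_mem_rootsOfUnity hmem
    exact ⟨n, hn⟩
  choose n hn using hroot
  let b : Q →ₗ[ℤ] ℤ := B.constr ℤ fun i => (n i : ℤ)
  let ζpow : ℤ →+ Additive kˣ := zmultiplesHom (Additive kˣ) (Additive.ofMul ζ)
  have h : (ζpow.comp b.toAddMonoidHom).toIntLinearMap = χ.toAddMonoidHom.toIntLinearMap :=
    B.ext fun i => by simp [ζpow, b, ← hn]
  exact ⟨b.toAddMonoidHom, fun α => Additive.ofMul.injective <| by
    simpa [ζpow, ofMul_zpow] using congr($h α)⟩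

theorem exists_twisting_character [Module.Free ℤ Q] {m : ℕ} [NeZero m] {ζ ξ : kˣ}
    (hζ : IsPrimitiveRoot ζ m) (hξ : ξ ^ m = ζ) {φ : AddMonoid.End Q} (hφ : φ ^ m = 1)
    {χ : AddChar Q kˣ} (hχ : χ ^ m = 1) (hχφ : χ.compAddMonoidHom φ = χ) :
    ∃ (s : AddChar Q kˣ) (ν : Q →+ ℤ),
      (∀ α, ν (φ α) = ν α) ∧ ∀ α, χ α * s (φ α) = ζ⁻¹ ^ ν α * s α := by
  obtain ⟨b, hb⟩ := exists_addMonoidHom_zpow_eq hζ (χ := χ⁻¹) (by simp [hχ])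
  have hbφ : ∀ α, (m : ℤ) ∣ b (φ α) - b α := fun α => by
    have hχφα : χ (φ α) = χ α := DFunLike.congr_fun hχφ α
    rw [← hζ.zpow_eq_one_iff_dvd, zpow_sub, hb, hb, AddChar.inv_apply', AddChar.inv_apply', hχφα,
      mul_inv_cancel]
  obtain ⟨a, ν, hν, ha⟩ := exists_invariant_of_dvd_sub b hφ hbφ
  let s : AddChar Q kˣ :=
    { toFun := fun α => ξ ^ a α
      map_zero_eq_one' := by simp
      map_add_eq_mul' := fun α β => by simp [zpow_add] }
  refine ⟨s, ν, hν, fun α => ?_⟩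
  have hχα : χ α = ξ ^ (-(m * b α)) := by
    rw [zpow_neg, zpow_mul, zpow_natCast, hξ, hb, AddChar.inv_apply', inv_inv]
  show χ α * ξ ^ a (φ α) = ζ⁻¹ ^ ν α * ξ ^ a α
  rw [hχα, ha, ← hξ, ← zpow_natCast, inv_zpow', ← zpow_mul, ← zpow_add, ← zpow_add]
  congr 1
  ring

end Characters

/-- **Erasing theorem.**  Let `g = ⊕_{α ∈ Q} g_α` be graded by a free
abelian group `Q` generated by the support of `g`.  If `τ, ρ` are automorphisms of `g`
with `τ^m = ρ^m = 1`, `τρ = ρτ`, `ρ = Ad(r)` for a homomorphism `r : Q → k^×`, and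
`τ` permutes the graded pieces via a group automorphism `τ̂` of `Q`, then
`L(g,τρ)` and `L(g,τ)` are isomorphic as Lie algebras over `R` (assuming compatible
primitive roots of unity of all orders `dm` exist in `k`). -/
theorem statement18 {k : Type*} [Field k] {g : Type*} [LieRing g] [LieAlgebra k g]
    (m : ℕ) (hm : 0 < m) (ζ : k) (hζ : IsPrimitiveRoot ζ m)
    {Q : Type*} [AddCommGroup Q] [DecidableEq Q] [Module.Free ℤ Q]
    (G : Q → Submodule k g)
    (hinternal : DirectSum.IsInternal G)
    (hsupport : AddSubgroup.closure {α : Q | G α ≠ ⊥} = ⊤)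
    (hgraded : ∀ (α β : Q), ∀ x ∈ G α, ∀ y ∈ G β, ⁅x, y⁆ ∈ G (α + β))
    (τ ρ : g ≃ₗ[k] g) (hbrτ : IsLieAut τ) (hbrρ : IsLieAut ρ)
    (hτ : τ ^ m = 1) (hρ : ρ ^ m = 1) (hcomm : τ * ρ = ρ * τ)
    (r : Q → kˣ) (hr : ∀ α β : Q, r (α + β) = r α * r β)
    (hAd : ∀ (α : Q), ∀ x ∈ G α, ρ x = ((r α : k)) • x)
    (τhat : Q ≃+ Q)
    (hτhat : ∀ α : Q, Submodule.map (τ : g →ₗ[k] g) (G α) = G (τhat α))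
    (hroots : ∀ d : ℕ, 0 < d → ∃ ξ : k, IsPrimitiveRoot ξ (d * m) ∧ ξ ^ d = ζ) :
    ∃ e : ↥(loopAlgebra m ζ (hζ.ne_zero hm.ne') hζ.pow_eq_one (τ * ρ) (hbrτ.mul hbrρ)
            (by rw [Commute.mul_pow (show Commute τ ρ from hcomm), hτ, hρ, mul_one]))
          ≃ₗ[↥(Rsub k m)]
        ↥(loopAlgebra m ζ (hζ.ne_zero hm.ne') hζ.pow_eq_one τ hbrτ hτ),
      ∀ x y, e ⁅x, y⁆ = ⁅e x, e y⁆ := by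
  have : NeZero m := ⟨hm.ne'⟩
  have hζ0 : ζ ≠ 0 := hζ.ne_zero hm.ne'
  obtain ⟨ξ, -, hξ⟩ := hroots m hm
  have hξ0 : ξ ≠ 0 := fun h => hζ0 (by rw [← hξ, h, zero_pow hm.ne'])
  let χ : AddChar Q kˣ :=
    { toFun := r
      map_zero_eq_one' := by simpa using hr 0 0
      map_add_eq_mul' := hr }
  have hτG : ∀ α, ∀ x ∈ G α, τ x ∈ G (τhat α) := fun α x hx =>
    hτhat α ▸ Submodule.mem_map_of_mem hx
  obtain ⟨s, ν, hν, hs⟩ := exists_twisting_character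
    ((IsPrimitiveRoot.coe_units_iff (ζ := Units.mk0 ζ hζ0)).mp hζ)
    (ξ := Units.mk0 ξ hξ0) (Units.ext (by simpa using hξ))
    (pow_eq_one_of_mapsTo_grading (φ := τhat.toAddMonoidHom) hinternal hsupport hτ hτG)
    (addChar_pow_eq_one_of_pow_eq_one (χ := χ) hsupport hρ hAd)
    (addChar_compAddMonoidHom_eq_of_commute (χ := χ) hsupport hcomm hτG hAd)
  exact exists_loopAlgebra_lieEquiv (gradedScaleEquiv hinternal s ν)
    (gradedScale_lie hinternal hgraded s ν) (gradedScale_twist hinternal hτG hAd hν hs)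

end LoopPaper
end
end
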